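/- arXiv:2211.13871 — 11 statements merged into one kernel-verified Lean document; each statement's English description precedes it below -/
import Mathlib

section
/- Let $(U_T)_{T\in\mathbb{T}}$ be subsets of $\mathbb{R}^p$ and $U = \bigcap_{\delta>0} \bigcup_{N\geq1} \bigcap_{T\geq N} (U_T)^\delta$. For any open set $O \subset \mathbb{R}^p$, any $R > 0$, and any $\delta > 0$, there exists $N$ such that for all $T \in \mathbb{T}$ with $T \geq N$, $(U \cap \overline{B_R}) \cap O \subset ((U_T \cap \overline{B_{2R}}) \cap O)^{\delta}$, where $B_R = \{x : |x| < R\}$. -/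
open Metric Set Filter

/-- The limit set `U = ⋂_{δ>0} ⋃_{N≥1} ⋂_{T≥N, T∈𝕋} (U_T)^δ`. -/
noncomputable def limSet {E : Type*} [PseudoEMetricSpace E] (𝕋 : Set ℝ) (Us : ℝ → Set E) :
    Set E :=
  ⋂ δ > (0 : ℝ), ⋃ N : ℕ, ⋂ (T : ℝ) (_ : T ∈ 𝕋) (_ : (N : ℝ) ≤ T), Metric.thickening δ (Us T)

/-- for any open `O`, `R > 0` and `δ > 0`, there is `N` such that for all
`T ∈ 𝕋` with `T ≥ N`, `(U ∩ B̄_R) ∩ O ⊆ ((U_T ∩ B̄_{2R}) ∩ O)^δ`. -/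
theorem limSet_approx_from_inside (p : ℕ) (𝕋 : Set ℝ) (h𝕋 : ∀ M : ℝ, ∃ T ∈ 𝕋, M ≤ T)
    (Us : ℝ → Set (EuclideanSpace ℝ (Fin p)))
    (O : Set (EuclideanSpace ℝ (Fin p))) (hO : IsOpen O) (R δ : ℝ) (hR : 0 < R) (hδ : 0 < δ) :
    ∃ N : ℕ, ∀ T ∈ 𝕋, (N : ℝ) ≤ T →
      (limSet 𝕋 Us ∩ Metric.closedBall 0 R) ∩ O ⊆
        Metric.thickening δ ((Us T ∩ Metric.closedBall 0 (2 * R)) ∩ O) := by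
  by_contra hcon
  push_neg at hcon
  simp only [Set.not_subset] at hcon
  choose T hT𝕋 hTge x hxK hxnot using hcon
  have hxball : ∀ k : ℕ, x k ∈ Metric.closedBall (0 : EuclideanSpace ℝ (Fin p)) R :=
    fun k => (hxK k).1.2
  obtain ⟨z, hz, φ, hφ, hφtend⟩ :=
    (isCompact_closedBall (0 : EuclideanSpace ℝ (Fin p)) R).tendsto_subseq hxball
  rw [Metric.tendsto_atTop] at hφtend
  obtain ⟨j0, hj0⟩ := hφtend (δ / 8) (by linarith)
  set x0 := x (φ j0) with hx0
  have hx0O : x0 ∈ O := (hxK (φ j0)).2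
  obtain ⟨ε, hε, hballsub⟩ := Metric.isOpen_iff.1 hO x0 hx0O
  set r : ℝ := min (δ / 4) (min (ε / 2) R) with hrdef
  have hrpos : 0 < r := lt_min (by linarith) (lt_min (by linarith) hR)
  have hrδ : r ≤ δ / 4 := min_le_left _ _
  have hrε : r ≤ ε / 2 := le_trans (min_le_right _ _) (min_le_left _ _)
  have hrR : r ≤ R := le_trans (min_le_right _ _) (min_le_right _ _)
  have hx0lim : x0 ∈ limSet 𝕋 Us := (hxK (φ j0)).1.1
  simp only [limSet, Set.mem_iInter, Set.mem_iUnion] at hx0lim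
  obtain ⟨N, hN⟩ := hx0lim r hrpos
  set i := max j0 N with hidef
  have hiN : (N : ℕ) ≤ φ i := le_trans (le_max_right j0 N) hφ.le_apply
  have hφiN : (N : ℝ) ≤ T (φ i) :=
    le_trans (by exact_mod_cast hiN) (hTge (φ i))
  have hy := hN (T (φ i)) (hT𝕋 (φ i)) hφiN
  obtain ⟨y, hyU, hyd⟩ := Metric.mem_thickening_iff.1 hy
  -- hyd : dist x0 y < r
  have hyO : y ∈ O := by
    apply hballsub
    rw [Metric.mem_ball, dist_comm]
    linarith
  have hx0R : dist x0 (0 : EuclideanSpace ℝ (Fin p)) ≤ R := hxball (φ j0)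
  have hy2R : y ∈ Metric.closedBall (0 : EuclideanSpace ℝ (Fin p)) (2 * R) := by
    rw [Metric.mem_closedBall]
    have := dist_triangle y x0 (0 : EuclideanSpace ℝ (Fin p))
    rw [dist_comm y x0] at this
    linarith
  have hdist1 : dist (x (φ i)) z < δ / 8 := hj0 i (le_max_left j0 N)
  have hdist2 : dist x0 z < δ / 8 := hj0 j0 le_rfl
  have hfinal : dist (x (φ i)) y < δ := by
    have h1 := dist_triangle (x (φ i)) z y
    have h2 := dist_triangle z x0 y
    rw [dist_comm z x0] at h2
    linarith
  exact hxnot (φ i) (Metric.mem_thickening_iff.2 ⟨y, ⟨⟨hyU, hy2R⟩, hyO⟩, hfinal⟩)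
end

section
/- Let $(U_T)_{T\in\mathbb{T}}$ be subsets of $\mathbb{R}^p$ and $U = \bigcap_{\delta>0} \bigcup_{N\geq1} \bigcap_{T\geq N} (U_T)^\delta$. Assume condition [A3]: $U \supset \bigcap_{N=1}^{\infty} \overline{\bigcup_{T\geq N} U_T}$. Then for any closed set $F \subset \mathbb{R}^p$, any $R > 0$, and any $\delta > 0$, there exists $N$ such that for all $T \in \mathbb{T}$ with $T \geq N$, $(U_T \cap \overline{B_R}) \cap F \subset ((U \cap \overline{B_R}) \cap F)^{\delta}$. -/
open Metric Set Filter

/-- under condition [A3], for any closed `F`, `R > 0` and `δ > 0`, there is `N`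
such that for all `T ∈ 𝕋` with `T ≥ N`, `(U_T ∩ B̄_R) ∩ F ⊆ ((U ∩ B̄_R) ∩ F)^δ`. -/
theorem limSet_approx_from_outside (p : ℕ) (𝕋 : Set ℝ) (h𝕋 : ∀ M : ℝ, ∃ T ∈ 𝕋, M ≤ T)
    (Us : ℝ → Set (EuclideanSpace ℝ (Fin p)))
    (hA3 : (⋂ N : ℕ, closure (⋃ (T : ℝ) (_ : T ∈ 𝕋) (_ : (N : ℝ) ≤ T), Us T)) ⊆ limSet 𝕋 Us)
    (F : Set (EuclideanSpace ℝ (Fin p))) (hF : IsClosed F)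
    (R δ : ℝ) (hR : 0 < R) (hδ : 0 < δ) :
    ∃ N : ℕ, ∀ T ∈ 𝕋, (N : ℝ) ≤ T →
      (Us T ∩ Metric.closedBall 0 R) ∩ F ⊆
        Metric.thickening δ ((limSet 𝕋 Us ∩ Metric.closedBall 0 R) ∩ F) := by
  by_contra h
  push_neg at h
  have h' : ∀ N : ℕ, ∃ T ∈ 𝕋, (N : ℝ) ≤ T ∧ ∃ x,
      x ∈ (Us T ∩ Metric.closedBall 0 R) ∩ F ∧
      x ∉ Metric.thickening δ ((limSet 𝕋 Us ∩ Metric.closedBall 0 R) ∩ F) := by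
    intro N
    obtain ⟨T, hT, hTN, hsub⟩ := h N
    exact ⟨T, hT, hTN, not_subset.mp hsub⟩
  choose T hT hTN x hxmem hxnot using h'
  have hK : IsCompact (Metric.closedBall (0 : EuclideanSpace ℝ (Fin p)) R ∩ F) :=
    (isCompact_closedBall 0 R).inter_right hF
  have hxK : ∀ n, x n ∈ Metric.closedBall (0 : EuclideanSpace ℝ (Fin p)) R ∩ F :=
    fun n => ⟨(hxmem n).1.2, (hxmem n).2⟩
  obtain ⟨a, haK, φ, hφ, hφtendsto⟩ := hK.tendsto_subseq hxK
  have ha : a ∈ ⋂ N : ℕ, closure (⋃ (T' : ℝ) (_ : T' ∈ 𝕋) (_ : (N : ℝ) ≤ T'), Us T') := by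
    rw [mem_iInter]
    intro N
    apply mem_closure_of_tendsto hφtendsto
    filter_upwards [eventually_ge_atTop N] with n hn
    have hNle : (N : ℝ) ≤ T (φ n) := by
      have : (N : ℝ) ≤ (φ n : ℝ) := by exact_mod_cast hn.trans hφ.le_apply
      exact this.trans (hTN (φ n))
    exact mem_iUnion₂.mpr ⟨T (φ n), hT _, mem_iUnion.mpr ⟨hNle, (hxmem _).1.1⟩⟩
  have haU : a ∈ limSet 𝕋 Us := hA3 ha
  have haS : a ∈ (limSet 𝕋 Us ∩ Metric.closedBall 0 R) ∩ F := ⟨⟨haU, haK.1⟩, haK.2⟩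
  have hev : ∀ᶠ n in atTop, (x ∘ φ) n ∈ Metric.ball a δ :=
    hφtendsto (Metric.ball_mem_nhds a hδ)
  obtain ⟨n, hn⟩ := hev.exists
  exact hxnot (φ n) (Metric.mem_thickening_iff.mpr ⟨a, haS, hn⟩)
end

section
/- Let $F \subset \mathbb{R}^p$ be a nonempty closed set, $f : F \to \mathbb{R}^n$ continuous, and $g_T : F \to \mathbb{R}^n$ continuous for each $T \in \mathbb{T}$. Suppose: [U1] for any $R>0$ there exists $T_0$ such that for all $T \geq T_0$, $U_T \cap B_R = \{u \in F : f(u) + g_T(u) \geq 0\} \cap B_R$; [U2] for any $R>0$, $\sup_{u \in F \cap B_R} |g_T(u)| \to 0$ as $T \to \infty$, and for a partition $\{\mathcal{K}_+, \mathcal{K}_c\}$ of $\{1,\dots,n\}$ there exists $T_1$ such that for $T \geq T_1$, $g_{k,T}(u) \geq 0$ for all $u \in F \cap B_R$ and $k \in \mathcal{K}_+$; [U3] $\overline{\{u \in F : f_k(u) \geq 0 \,(k \in \mathcal{K}_+),\, f_k(u) > 0\, (k \in \mathcal{K}_c)\}} \supset \{u \in F : f(u) \geq 0\}$. Then $U =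 \bigcap_{\delta>0}\bigcup_{N\geq1}\bigcap_{T\geq N}(U_T)^\delta$ satisfies $U = \{u \in F : f(u) \geq 0\}$ and also $U \supset \bigcap_{N=1}^{\infty}\overline{\bigcup_{T\geq N} U_T}$. -/
open Metric Set Filter

/-- Theorem `thmU`: under [U1]-[U3], condition [A3] holds and
`U = {u ∈ F : f(u) ≥ 0}`. -/
theorem thmU (p n : ℕ) (𝕋 : Set ℝ) (h𝕋 : ∀ M : ℝ, ∃ T ∈ 𝕋, M ≤ T)
    (Us : ℝ → Set (EuclideanSpace ℝ (Fin p)))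
    (F : Set (EuclideanSpace ℝ (Fin p))) (hFcl : IsClosed F) (hFne : F.Nonempty)
    (f : EuclideanSpace ℝ (Fin p) → Fin n → ℝ) (hf : ContinuousOn f F)
    (g : ℝ → EuclideanSpace ℝ (Fin p) → Fin n → ℝ) (hg : ∀ T, ContinuousOn (g T) F)
    (Kp Kc : Set (Fin n)) (hKcov : Kp ∪ Kc = Set.univ) (hKdisj : Disjoint Kp Kc)
    -- [U1]
    (hU1 : ∀ R > (0 : ℝ), ∃ T0 ∈ 𝕋, ∀ T ∈ 𝕋, T0 ≤ T →
      Us T ∩ Metric.ball 0 R = {u ∈ F | ∀ k, 0 ≤ f u k + g T u k} ∩ Metric.ball 0 R)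
    -- [U2], first part: sup_{u ∈ F ∩ B_R} |g_T(u)| → 0 as T → ∞
    (hU2a : ∀ R > (0 : ℝ), ∀ ε > (0 : ℝ), ∃ T0 : ℝ, ∀ T ∈ 𝕋, T0 ≤ T →
      ∀ u ∈ F ∩ Metric.ball 0 R, ‖g T u‖ < ε)
    -- [U2], second part: g⁺_T ≥ 0 on F ∩ B_R for large T
    (hU2b : ∀ R > (0 : ℝ), ∃ T1 ∈ 𝕋, ∀ T ∈ 𝕋, T1 ≤ T →
      ∀ u ∈ F ∩ Metric.ball 0 R, ∀ k ∈ Kp, 0 ≤ g T u k)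
    -- [U3]
    (hU3 : {u ∈ F | ∀ k, 0 ≤ f u k} ⊆
      closure {u ∈ F | (∀ k ∈ Kp, 0 ≤ f u k) ∧ ∀ k ∈ Kc, 0 < f u k}) :
    limSet 𝕋 Us = {u ∈ F | ∀ k, 0 ≤ f u k} ∧
      (⋂ N : ℕ, closure (⋃ (T : ℝ) (_ : T ∈ 𝕋) (_ : (N : ℝ) ≤ T), Us T)) ⊆ limSet 𝕋 Us := by
  classical
  -- norm bound helper
  have hball : ∀ (u v : EuclideanSpace ℝ (Fin p)), dist u v < 1 →
      v ∈ Metric.ball (0 : EuclideanSpace ℝ (Fin p)) (‖u‖ + 1) := by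
    intro u v hd
    rw [mem_ball_zero_iff]
    have h3 : dist v 0 ≤ dist v u + dist u 0 := dist_triangle _ _ _
    rw [dist_zero_right, dist_zero_right, dist_comm] at h3
    linarith
  -- KEY: any point approximated by points of `Us T` for arbitrarily large `T` lies in `S`.
  have key : ∀ u : EuclideanSpace ℝ (Fin p),
      (∀ M : ℝ, ∀ ε > (0:ℝ), ∃ T ∈ 𝕋, M ≤ T ∧ ∃ v ∈ Us T, dist u v < ε) →
      u ∈ {u ∈ F | ∀ k, 0 ≤ f u k} := by
    intro u hu
    have hR0 : (0:ℝ) < ‖u‖ + 1 := by positivity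
    obtain ⟨T0, hT0𝕋, hT0⟩ := hU1 (‖u‖ + 1) hR0
    have huF : u ∈ F := by
      rw [← hFcl.closure_eq, Metric.mem_closure_iff]
      intro ε hε
      obtain ⟨T, hT𝕋, hTge, v, hvUs, hd⟩ := hu T0 (min ε 1) (by positivity)
      have hvb := hball u v (hd.trans_le (min_le_right _ _))
      have hveq : v ∈ ({u ∈ F | ∀ k, 0 ≤ f u k + g T u k} ∩
          Metric.ball (0 : EuclideanSpace ℝ (Fin p)) (‖u‖ + 1)) := by
        rw [← hT0 T hT𝕋 hTge]; exact ⟨hvUs, hvb⟩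
      exact ⟨v, hveq.1.1, hd.trans_le (min_le_left _ _)⟩
    refine ⟨huF, fun k => ?_⟩
    by_contra hneg
    push_neg at hneg
    set η : ℝ := -f u k / 3 with hηdef
    have hη : 0 < η := by simp only [hηdef]; linarith
    have hck : ContinuousWithinAt (fun x => f x k) F u :=
      ((continuous_apply k).comp_continuousOn hf) u huF
    obtain ⟨ε1, hε1, hcont⟩ := Metric.continuousWithinAt_iff.1 hck η hη
    obtain ⟨T2, hT2⟩ := hU2a (‖u‖ + 1) hR0 η hη
    obtain ⟨T, hT𝕋, hTge, v, hvUs, hd⟩ := hu (max T0 T2)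
      (min ε1 1) (by positivity)
    have hvb := hball u v (hd.trans_le (min_le_right _ _))
    have hveq : v ∈ ({u ∈ F | ∀ k, 0 ≤ f u k + g T u k} ∩
        Metric.ball (0 : EuclideanSpace ℝ (Fin p)) (‖u‖ + 1)) := by
      rw [← hT0 T hT𝕋 (le_trans (le_max_left _ _) hTge)]; exact ⟨hvUs, hvb⟩
    have hvF : v ∈ F := hveq.1.1
    have hgsm : ‖g T v‖ < η := hT2 T hT𝕋 (le_trans (le_max_right _ _) hTge) v ⟨hvF, hvb⟩
    have hgk : |g T v k| ≤ ‖g T v‖ := by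
      have := norm_le_pi_norm (g T v) k
      simpa [Real.norm_eq_abs] using this
    have hfv : 0 ≤ f v k + g T v k := hveq.1.2 k
    have hcl : dist (f v k) (f u k) < η := by
      exact hcont hvF ((dist_comm u v ▸ hd).trans_le (min_le_left _ _))
    rw [Real.dist_eq] at hcl
    have h1 := abs_lt.1 hcl
    have h2 := abs_le.1 hgk
    simp only [hηdef] at *
    linarith
  -- S ⊆ limSet
  have hS2lim : {u ∈ F | ∀ k, 0 ≤ f u k} ⊆ limSet 𝕋 Us := by
    intro u hu
    simp only [limSet, mem_iInter, mem_iUnion]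
    intro δ hδ
    obtain ⟨v, hvS, hdv⟩ := Metric.mem_closure_iff.1 (hU3 hu) δ hδ
    obtain ⟨hvF, hvp, hvc⟩ := hvS
    have hR0 : (0:ℝ) < ‖v‖ + 1 := by positivity
    -- a positive lower bound on `f v k` over `Kc`
    set t : Finset ℝ := insert (1:ℝ) (Finset.image (fun k => f v k)
      (Finset.univ.filter (fun k => k ∈ Kc))) with htdef
    have htne : t.Nonempty := ⟨1, Finset.mem_insert_self _ _⟩
    set ε : ℝ := t.min' htne with hεdef
    have hε : 0 < ε := by
      rw [hεdef, Finset.lt_min'_iff]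
      intro b hb
      rcases Finset.mem_insert.1 hb with h | h
      · rw [h]; exact one_pos
      · obtain ⟨k, hk, hk2⟩ := Finset.mem_image.1 h
        rw [← hk2]; exact hvc k (Finset.mem_filter.1 hk).2
    have hεle : ∀ k ∈ Kc, ε ≤ f v k := by
      intro k hk
      apply Finset.min'_le
      rw [htdef]
      exact Finset.mem_insert_of_mem (Finset.mem_image.2
        ⟨k, Finset.mem_filter.2 ⟨Finset.mem_univ _, hk⟩, rfl⟩)
    obtain ⟨T0, hT0𝕋, hT0⟩ := hU1 (‖v‖ + 1) hR0
    obtain ⟨T2, hT2⟩ := hU2a (‖v‖ + 1) hR0 ε hε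
    obtain ⟨T1, hT1𝕋, hT1⟩ := hU2b (‖v‖ + 1) hR0
    refine ⟨⌈max T0 (max T1 T2)⌉₊, fun T hT𝕋 hNT => ?_⟩
    have hge : max T0 (max T1 T2) ≤ T := le_trans (Nat.le_ceil _) hNT
    have hvb : v ∈ Metric.ball (0 : EuclideanSpace ℝ (Fin p)) (‖v‖ + 1) := by
      rw [mem_ball_zero_iff]; linarith
    have hgsm : ‖g T v‖ < ε := hT2 T hT𝕋
      (le_trans (le_trans (le_max_right T1 T2) (le_max_right T0 _)) hge) v ⟨hvF, hvb⟩
    have hvmem : v ∈ ({u ∈ F | ∀ k, 0 ≤ f u k + g T u k} ∩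
        Metric.ball (0 : EuclideanSpace ℝ (Fin p)) (‖v‖ + 1)) := by
      refine ⟨⟨hvF, fun k => ?_⟩, hvb⟩
      have hk : k ∈ Kp ∪ Kc := by rw [hKcov]; exact mem_univ k
      rcases hk with hk | hk
      · exact add_nonneg (hvp k hk)
          (hT1 T hT𝕋 (le_trans (le_trans (le_max_left T1 T2) (le_max_right T0 _)) hge)
            v ⟨hvF, hvb⟩ k hk)
      · have hgk : |g T v k| ≤ ‖g T v‖ := by
          have := norm_le_pi_norm (g T v) k
          simpa [Real.norm_eq_abs] using this
        have := hεle k hk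
        have h2 := abs_le.1 hgk
        linarith
    rw [← hT0 T hT𝕋 (le_trans (le_max_left _ _) hge)] at hvmem
    exact Metric.mem_thickening_iff.2 ⟨v, hvmem.1, hdv⟩
  -- limSet ⊆ S
  have hlim2S : limSet 𝕋 Us ⊆ {u ∈ F | ∀ k, 0 ≤ f u k} := by
    intro u hu
    apply key
    intro M ε hε
    simp only [limSet, mem_iInter, mem_iUnion] at hu
    obtain ⟨N, hN⟩ := hu ε hε
    obtain ⟨T, hT𝕋, hTM⟩ := h𝕋 (max M N)
    have := hN T hT𝕋 (le_trans (le_max_right _ _) hTM)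
    obtain ⟨v, hv, hdv⟩ := Metric.mem_thickening_iff.1 this
    exact ⟨T, hT𝕋, le_trans (le_max_left _ _) hTM, v, hv, hdv⟩
  -- A3 set ⊆ S
  have hK2S : (⋂ N : ℕ, closure (⋃ (T : ℝ) (_ : T ∈ 𝕋) (_ : (N : ℝ) ≤ T), Us T)) ⊆
      {u ∈ F | ∀ k, 0 ≤ f u k} := by
    intro u hu
    apply key
    intro M ε hε
    have := mem_iInter.1 hu ⌈M⌉₊
    obtain ⟨v, hv, hdv⟩ := Metric.mem_closure_iff.1 this ε hε
    simp only [mem_iUnion] at hv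
    obtain ⟨T, hT𝕋, hTN, hvUs⟩ := hv
    exact ⟨T, hT𝕋, le_trans (Nat.le_ceil M) hTN, v, hvUs, hdv⟩
  exact ⟨Subset.antisymm hlim2S hS2lim, fun u hu => hS2lim (hK2S hu)⟩
end

section
/- Let $\Theta = \prod_{i=1}^{a}[0, a_i] \times \prod_{j=1}^{b}[-b_j, 0] \times \prod_{k=1}^{c}[-c_k, d_k] \subset \mathbb{R}^p$ with $p = a+b+c$ and all $a_i, b_j, c_k, d_k > 0$. Let $\theta^* = (\alpha_1^*,\dots,\alpha_a^*, \beta_1^*,\dots,\beta_b^*, \gamma_1^*,\dots,\gamma_c^*) \in \Theta$ with $0 \leq \alpha_i^* < a_i$, $-b_j < \beta_j^* \leq 0$, $-c_k < \gamma_k^* < d_k$. Let $a_T = \mathrm{diag}(a_{1,T},\dots,a_{p,T})$ be diagonal invertible matrices with positive entries tending to $0$, set $U_T = \{u \in \mathbb{R}^p : \theta^* + a_T u \in \Theta\}$ and $U = \bigcap_{\delta>0}\bigcup_{N\geq1}\bigcap_{T\geq N}(U_T)^\delta$. Then $U = \prod_{i=1}^a A_i \times \prod_{j=1}^b B_j \times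 \mathbb{R}^c$, where $A_i = [0,\infty)$ if $\alpha_i^* = 0$ and $A_i = \mathbb{R}$ otherwise, and $B_j = (-\infty, 0]$ if $\beta_j^* = 0$ and $B_j = \mathbb{R}$ otherwise. -/
open Metric Set Filter

lemma coord_le_dist' {ι : Type*} [Fintype ι] (u v : EuclideanSpace ℝ ι) (i : ι) :
    dist (u i) (v i) ≤ dist u v := by
  rw [EuclideanSpace.dist_eq]
  rw [show dist (u i) (v i) = Real.sqrt (dist (u i) (v i) ^ 2) from (Real.sqrt_sq dist_nonneg).symm]
  apply Real.sqrt_le_sqrt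
  exact Finset.single_le_sum (f := fun j => dist (u j) (v j) ^ 2)
    (fun j _ => sq_nonneg _) (Finset.mem_univ i)

/-- Example 2.1: for `Θ = ∏[0,aᵢ] × ∏[-bⱼ,0] × ∏[-cₖ,dₖ]`, a true value `θ*`
with `0 ≤ αᵢ* < aᵢ`, `-bⱼ < βⱼ* ≤ 0`, `-cₖ < γₖ* < dₖ`, and diagonal rates `a_T → 0` with
positive entries, the limit set `U` of `U_T = {u : θ* + a_T u ∈ Θ}` equals
`∏ Aᵢ × ∏ Bⱼ × ℝ^c` where `Aᵢ = [0,∞)` iff `αᵢ* = 0` (else `ℝ`) and `Bⱼ = (-∞,0]` iff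
`βⱼ* = 0` (else `ℝ`). -/
theorem example_product_parameter_space (a b c : ℕ)
    (A : Fin a → ℝ) (B : Fin b → ℝ) (C : Fin c → ℝ) (D : Fin c → ℝ)
    (hA : ∀ i, 0 < A i) (hB : ∀ j, 0 < B j) (hC : ∀ k, 0 < C k) (hD : ∀ k, 0 < D k)
    (𝕋 : Set ℝ) (h𝕋 : ∀ M : ℝ, ∃ T ∈ 𝕋, M ≤ T)
    (θs : EuclideanSpace ℝ (Fin a ⊕ Fin b ⊕ Fin c))
    (hθa : ∀ i, 0 ≤ θs (Sum.inl i) ∧ θs (Sum.inl i) < A i)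
    (hθb : ∀ j, -(B j) < θs (Sum.inr (Sum.inl j)) ∧ θs (Sum.inr (Sum.inl j)) ≤ 0)
    (hθc : ∀ k, -(C k) < θs (Sum.inr (Sum.inr k)) ∧ θs (Sum.inr (Sum.inr k)) < D k)
    (aT : ℝ → (Fin a ⊕ Fin b ⊕ Fin c) → ℝ)
    (haTpos : ∀ T i, 0 < aT T i)
    (haT : ∀ i, Tendsto (fun T => aT T i) (atTop ⊓ Filter.principal 𝕋) (nhds 0)) :
    limSet 𝕋 (fun T =>
        {u : EuclideanSpace ℝ (Fin a ⊕ Fin b ⊕ Fin c) |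
          (∀ i, θs (Sum.inl i) + aT T (Sum.inl i) * u (Sum.inl i) ∈ Set.Icc 0 (A i)) ∧
          (∀ j, θs (Sum.inr (Sum.inl j)) + aT T (Sum.inr (Sum.inl j)) * u (Sum.inr (Sum.inl j))
              ∈ Set.Icc (-(B j)) 0) ∧
          (∀ k, θs (Sum.inr (Sum.inr k)) + aT T (Sum.inr (Sum.inr k)) * u (Sum.inr (Sum.inr k))
              ∈ Set.Icc (-(C k)) (D k))}) =
      {u : EuclideanSpace ℝ (Fin a ⊕ Fin b ⊕ Fin c) |
        (∀ i, θs (Sum.inl i) = 0 → 0 ≤ u (Sum.inl i)) ∧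
        (∀ j, θs (Sum.inr (Sum.inl j)) = 0 → u (Sum.inr (Sum.inl j)) ≤ 0)} := by
  set l : Filter ℝ := atTop ⊓ Filter.principal 𝕋 with hl
  ext u
  simp only [limSet, Set.mem_iInter, Set.mem_iUnion, Set.mem_setOf_eq]
  constructor
  · intro hu
    constructor
    · intro i hi
      by_contra hneg
      push_neg at hneg
      obtain ⟨N, hN⟩ := hu (-(u (Sum.inl i)) / 2) (by linarith)
      obtain ⟨T, hT, hNT⟩ := h𝕋 N
      have hm := hN T hT hNT
      rw [Metric.mem_thickening_iff] at hm
      obtain ⟨v, hv, hd⟩ := hm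
      have h1 := (hv.1 i).1
      rw [hi, zero_add] at h1
      have hv0 : 0 ≤ v (Sum.inl i) := by
        by_contra hc; push_neg at hc
        nlinarith [mul_pos (haTpos T (Sum.inl i)) (neg_pos.mpr hc)]
      have hle := coord_le_dist' u v (Sum.inl i)
      rw [Real.dist_eq] at hle
      have h2 : -(u (Sum.inl i)) ≤ dist u v := by
        calc -(u (Sum.inl i)) ≤ v (Sum.inl i) - u (Sum.inl i) := by linarith
        _ ≤ |u (Sum.inl i) - v (Sum.inl i)| := by
            rw [abs_sub_comm]; exact le_abs_self _
        _ ≤ dist u v := hle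
      linarith
    · intro j hj
      by_contra hneg
      push_neg at hneg
      obtain ⟨N, hN⟩ := hu (u (Sum.inr (Sum.inl j)) / 2) (by linarith)
      obtain ⟨T, hT, hNT⟩ := h𝕋 N
      have hm := hN T hT hNT
      rw [Metric.mem_thickening_iff] at hm
      obtain ⟨v, hv, hd⟩ := hm
      have h1 := (hv.2.1 j).2
      rw [hj, zero_add] at h1
      have hv0 : v (Sum.inr (Sum.inl j)) ≤ 0 := by
        by_contra hc; push_neg at hc
        nlinarith [mul_pos (haTpos T (Sum.inr (Sum.inl j))) hc]
      have hle := coord_le_dist' u v (Sum.inr (Sum.inl j))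
      rw [Real.dist_eq] at hle
      have h2 : u (Sum.inr (Sum.inl j)) ≤ dist u v := by
        calc u (Sum.inr (Sum.inl j)) ≤ u (Sum.inr (Sum.inl j)) - v (Sum.inr (Sum.inl j)) := by
              linarith
        _ ≤ |u (Sum.inr (Sum.inl j)) - v (Sum.inr (Sum.inl j))| := le_abs_self _
        _ ≤ dist u v := hle
      linarith
  · rintro ⟨hu1, hu2⟩ δ hδ
    have key : ∀ (s : Fin a ⊕ Fin b ⊕ Fin c) (r : ℝ), 0 < r →
        ∀ᶠ T in l, |aT T s * u s| < r := by
      intro s r hr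
      have h0 : Tendsto (fun T => aT T s * u s) l (nhds 0) := by
        simpa using (haT s).mul_const (u s)
      have := Metric.tendsto_nhds.mp h0 r hr
      simp only [Real.dist_eq, sub_zero] at this
      exact this
    have hevA : ∀ᶠ T in l, ∀ i,
        θs (Sum.inl i) + aT T (Sum.inl i) * u (Sum.inl i) ∈ Set.Icc 0 (A i) := by
      rw [eventually_all]
      intro i
      rcases eq_or_lt_of_le (hθa i).1 with h0 | hpos
      · have hu0 := hu1 i h0.symm
        filter_upwards [key (Sum.inl i) (A i) (hA i)] with T hT
        have habs := abs_lt.mp hT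
        constructor
        · rw [← h0, zero_add]
          exact mul_nonneg (haTpos T _).le hu0
        · rw [← h0, zero_add]; linarith [habs.2]
      · have hr : 0 < min (θs (Sum.inl i)) (A i - θs (Sum.inl i)) :=
          lt_min hpos (by linarith [(hθa i).2])
        filter_upwards [key (Sum.inl i) _ hr] with T hT
        have habs := abs_lt.mp hT
        constructor
        · have := min_le_left (θs (Sum.inl i)) (A i - θs (Sum.inl i)); linarith
        · have := min_le_right (θs (Sum.inl i)) (A i - θs (Sum.inl i)); linarith
    have hevB : ∀ᶠ T in l, ∀ j,
        θs (Sum.inr (Sum.inl j)) + aT T (Sum.inr (Sum.inl j)) * u (Sum.inr (Sum.inl j))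
          ∈ Set.Icc (-(B j)) 0 := by
      rw [eventually_all]
      intro j
      rcases eq_or_lt_of_le (hθb j).2 with h0 | hneg
      · have hu0 := hu2 j h0
        filter_upwards [key (Sum.inr (Sum.inl j)) (B j) (hB j)] with T hT
        have habs := abs_lt.mp hT
        constructor
        · rw [h0, zero_add]; linarith [habs.1]
        · rw [h0, zero_add]
          exact mul_nonpos_of_nonneg_of_nonpos (haTpos T _).le hu0
      · have hr : 0 < min (-(θs (Sum.inr (Sum.inl j)))) (B j + θs (Sum.inr (Sum.inl j))) :=
          lt_min (by linarith) (by linarith [(hθb j).1])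
        filter_upwards [key (Sum.inr (Sum.inl j)) _ hr] with T hT
        have habs := abs_lt.mp hT
        constructor
        · have := min_le_right (-(θs (Sum.inr (Sum.inl j)))) (B j + θs (Sum.inr (Sum.inl j)))
          linarith
        · have := min_le_left (-(θs (Sum.inr (Sum.inl j)))) (B j + θs (Sum.inr (Sum.inl j)))
          linarith
    have hevC : ∀ᶠ T in l, ∀ k,
        θs (Sum.inr (Sum.inr k)) + aT T (Sum.inr (Sum.inr k)) * u (Sum.inr (Sum.inr k))
          ∈ Set.Icc (-(C k)) (D k) := by
      rw [eventually_all]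
      intro k
      have hr : 0 < min (C k + θs (Sum.inr (Sum.inr k))) (D k - θs (Sum.inr (Sum.inr k))) :=
        lt_min (by linarith [(hθc k).1]) (by linarith [(hθc k).2])
      filter_upwards [key (Sum.inr (Sum.inr k)) _ hr] with T hT
      have habs := abs_lt.mp hT
      constructor
      · have := min_le_left (C k + θs (Sum.inr (Sum.inr k))) (D k - θs (Sum.inr (Sum.inr k)))
        linarith
      · have := min_le_right (C k + θs (Sum.inr (Sum.inr k))) (D k - θs (Sum.inr (Sum.inr k)))
        linarith
    have hev := hevA.and (hevB.and hevC)
    rw [hl, eventually_inf_principal, eventually_atTop] at hev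
    obtain ⟨M, hM⟩ := hev
    obtain ⟨N, hN⟩ := exists_nat_ge M
    refine ⟨N, ?_⟩
    intro T hT hNT
    exact Metric.self_subset_thickening hδ _ (hM T (le_trans hN hNT) hT)
end

section
/- Let $\mathcal{S}^m$ be the space of $m \times m$ real symmetric matrices and $\mathcal{S}_+^m$ the subset of positive semi-definite matrices. Let $A^* \in \mathcal{S}_+^m$ with rank $r^* < m$, and let $K$ be an $m \times (m - r^*)$ matrix whose columns form a basis of $\ker A^*$. For $T > 0$ let $U_T = \{w \in \mathcal{S}^m : A^* + T^{-1/2} w \in \mathcal{S}_+^m\}$ and $U = \bigcap_{\delta>0}\bigcup_{N\geq1}\bigcap_{T\geq N}(U_T)^\delta$ (with neighborhoods taken in the Frobenius norm on $\mathcal{S}^m$). Then $U = \{w \in \mathcal{S}^m : K' w K \in \mathcal{S}_+^{m-r^*}\}$. -/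
open Metric Set Filter Matrix

/-- The Frobenius norm of a real matrix. -/
noncomputable def frobNorm {m : ℕ} (M : Matrix (Fin m) (Fin m) ℝ) : ℝ :=
  Real.sqrt (∑ i, ∑ j, (M i j) ^ 2)

/-- The `δ`-enlargement of a set of matrices in the Frobenius norm. -/
def frobThick {m : ℕ} (δ : ℝ) (A : Set (Matrix (Fin m) (Fin m) ℝ)) :
    Set (Matrix (Fin m) (Fin m) ℝ) :=
  {x | ∃ a ∈ A, frobNorm (x - a) < δ}

/-- The limit set `U` for a family of matrix sets indexed by `T > 0`. -/
def limSetMat {m : ℕ} (Us : ℝ → Set (Matrix (Fin m) (Fin m) ℝ)) :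
    Set (Matrix (Fin m) (Fin m) ℝ) :=
  ⋂ δ > (0 : ℝ), ⋃ N : ℕ, ⋂ (T : ℝ) (_ : 0 < T) (_ : (N : ℝ) ≤ T), frobThick δ (Us T)


section aux
variable {m : ℕ}

lemma frobNorm_nonneg (M : Matrix (Fin m) (Fin m) ℝ) : 0 ≤ frobNorm M :=
  Real.sqrt_nonneg _

lemma frob_entry_le (M : Matrix (Fin m) (Fin m) ℝ) (i j : Fin m) :
    |M i j| ≤ frobNorm M := by
  rw [frobNorm, ← Real.sqrt_sq_eq_abs]
  apply Real.sqrt_le_sqrt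
  calc M i j ^ 2 ≤ ∑ j', M i j' ^ 2 :=
        Finset.single_le_sum (f := fun j' => M i j' ^ 2) (fun _ _ => sq_nonneg _) (Finset.mem_univ j)
    _ ≤ ∑ i', ∑ j', M i' j' ^ 2 :=
        Finset.single_le_sum (f := fun i' => ∑ j', M i' j' ^ 2)
          (fun i' _ => Finset.sum_nonneg fun _ _ => sq_nonneg _) (Finset.mem_univ i)

lemma dotProduct_self_nonneg' (x : Fin m → ℝ) : 0 ≤ x ⬝ᵥ x :=
  Finset.sum_nonneg fun i _ => mul_self_nonneg (x i)

lemma frob_quad_bound (M : Matrix (Fin m) (Fin m) ℝ) (x : Fin m → ℝ) :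
    |x ⬝ᵥ (M *ᵥ x)| ≤ frobNorm M * (x ⬝ᵥ x) := by
  have h1 : x ⬝ᵥ (M *ᵥ x) = ∑ p : Fin m × Fin m, M p.1 p.2 * (x p.1 * x p.2) := by
    rw [← Finset.univ_product_univ, Finset.sum_product]
    simp only [dotProduct, mulVec, Finset.mul_sum]
    congr 1; ext i; congr 1; ext j; ring
  have h2 : (∑ p : Fin m × Fin m, M p.1 p.2 * (x p.1 * x p.2)) ^ 2 ≤
      (∑ p : Fin m × Fin m, (M p.1 p.2) ^ 2) * (∑ p : Fin m × Fin m, (x p.1 * x p.2) ^ 2) :=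
    Finset.sum_mul_sq_le_sq_mul_sq _ _ _
  have h3 : (∑ p : Fin m × Fin m, (M p.1 p.2) ^ 2) = ∑ i, ∑ j, (M i j) ^ 2 := by
    rw [← Finset.univ_product_univ, Finset.sum_product]
  have h4 : (∑ p : Fin m × Fin m, (x p.1 * x p.2) ^ 2) = (x ⬝ᵥ x) ^ 2 := by
    rw [← Finset.univ_product_univ, Finset.sum_product]
    simp only [dotProduct, sq, Finset.sum_mul, Finset.mul_sum]
    congr 1; ext i; congr 1; ext j; ring
  rw [h1, ← Real.sqrt_sq_eq_abs]
  calc Real.sqrt ((∑ p : Fin m × Fin m, M p.1 p.2 * (x p.1 * x p.2)) ^ 2)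
      ≤ Real.sqrt ((∑ i, ∑ j, (M i j) ^ 2) * (x ⬝ᵥ x) ^ 2) := by
        apply Real.sqrt_le_sqrt; rw [← h3, ← h4]; exact h2
    _ = frobNorm M * (x ⬝ᵥ x) := by
        rw [Real.sqrt_mul (x := ∑ i, ∑ j, (M i j) ^ 2) (Finset.sum_nonneg fun _ _ => Finset.sum_nonneg fun _ _ => sq_nonneg _),
          Real.sqrt_sq (dotProduct_self_nonneg' x), frobNorm]

lemma quad_cont (M : Matrix (Fin m) (Fin m) ℝ) :
    Continuous fun x : Fin m → ℝ => x ⬝ᵥ (M *ᵥ x) := by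
  simp only [dotProduct, mulVec]
  exact continuous_finset_sum _ fun i _ => (continuous_apply i).mul
    (continuous_finset_sum _ fun j _ => continuous_const.mul (continuous_apply j))

lemma quad_smul (M : Matrix (Fin m) (Fin m) ℝ) (c : ℝ) (y : Fin m → ℝ) :
    (c • y) ⬝ᵥ (M *ᵥ (c • y)) = c ^ 2 * (y ⬝ᵥ (M *ᵥ y)) := by
  rw [mulVec_smul, dotProduct_smul, smul_dotProduct]
  simp [smul_eq_mul]; ring

lemma sum_smul_col {n : ℕ} (K : Matrix (Fin m) (Fin n) ℝ) (c : Fin n → ℝ) :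
    ∑ j, c j • (fun i => K i j) = K *ᵥ c := by
  ext i
  simp [mulVec, dotProduct, Finset.sum_apply, mul_comm]

lemma quad_K {n : ℕ} (K : Matrix (Fin m) (Fin n) ℝ) (w : Matrix (Fin m) (Fin m) ℝ)
    (v : Fin n → ℝ) :
    v ⬝ᵥ ((Kᵀ * w * K) *ᵥ v) = (K *ᵥ v) ⬝ᵥ (w *ᵥ (K *ᵥ v)) := by
  rw [Matrix.mul_assoc, ← mulVec_mulVec, dotProduct_mulVec, vecMul_transpose, ← mulVec_mulVec]

lemma dot_self_pos {x : Fin m → ℝ} (hx : x ≠ 0) : 0 < x ⬝ᵥ x := by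
  obtain ⟨i, hi⟩ := Function.ne_iff.mp hx
  exact Finset.sum_pos' (fun j _ => mul_self_nonneg _)
    ⟨i, Finset.mem_univ i, mul_self_pos.mpr hi⟩

end aux

lemma exists_t0 {m : ℕ} (Astar w : Matrix (Fin m) (Fin m) ℝ) (hA : Astar.PosSemidef)
    (hker : ∀ x : Fin m → ℝ, Astar *ᵥ x = 0 → 0 ≤ x ⬝ᵥ (w *ᵥ x)) {ε : ℝ} (hε : 0 < ε) :
    ∃ t0 > 0, ∀ t : ℝ, 0 < t → t ≤ t0 → ∀ x : Fin m → ℝ,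
      0 ≤ x ⬝ᵥ ((Astar + t • (w + ε • 1)) *ᵥ x) := by
  set g : (Fin m → ℝ) → ℝ := fun x => x ⬝ᵥ (Astar *ᵥ x) with hg
  set h : (Fin m → ℝ) → ℝ :=
    fun x => x ⬝ᵥ ((w + ε • (1 : Matrix (Fin m) (Fin m) ℝ)) *ᵥ x) with hh
  have hgnn : ∀ x, 0 ≤ g x := fun x => by simpa using hA.dotProduct_mulVec_nonneg x
  have hexpand : ∀ (t : ℝ) (x : Fin m → ℝ),
      x ⬝ᵥ ((Astar + t • (w + ε • 1)) *ᵥ x) = g x + t * h x := by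
    intro t x
    simp only [hg, hh, add_mulVec, smul_mulVec, dotProduct_add, dotProduct_smul,
      smul_eq_mul]
  have hh2 : ∀ x, h x = x ⬝ᵥ (w *ᵥ x) + ε * (x ⬝ᵥ x) := by
    intro x
    simp only [hh, add_mulVec, smul_mulVec, dotProduct_add, dotProduct_smul,
      smul_eq_mul, one_mulVec]
  have hS : IsCompact (sphere (0 : Fin m → ℝ) 1 ∩ {x | h x ≤ 0}) :=
    (isCompact_sphere 0 1).inter_right (isClosed_le (quad_cont _) continuous_const)
  have hgpos : ∀ x ∈ sphere (0 : Fin m → ℝ) 1 ∩ {x | h x ≤ 0}, 0 < g x := by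
    rintro x ⟨hx1, hx2⟩
    rcases lt_or_eq_of_le (hgnn x) with h' | h'
    · exact h'
    · exfalso
      have hx0 : Astar *ᵥ x = 0 := by
        have h5 := (hA.dotProduct_mulVec_zero_iff x)
        rw [star_trivial] at h5
        exact h5.mp h'.symm
      have hxne : x ≠ 0 := by
        intro hc; rw [mem_sphere_zero_iff_norm, hc, norm_zero] at hx1; norm_num at hx1
      have h6 := hker x hx0
      have h3 := hh2 x
      have h7 := dot_self_pos hxne
      simp only [mem_setOf_eq] at hx2
      nlinarith
  obtain ⟨C, hC⟩ := (isCompact_sphere (0 : Fin m → ℝ) 1).exists_bound_of_continuousOn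
    (quad_cont (w + ε • 1)).continuousOn
  have key : ∃ t0 > 0, ∀ y ∈ sphere (0 : Fin m → ℝ) 1, ∀ t, 0 < t → t ≤ t0 →
      0 ≤ g y + t * h y := by
    rcases (sphere (0 : Fin m → ℝ) 1 ∩ {x | h x ≤ 0}).eq_empty_or_nonempty with hS' | hS'
    · refine ⟨1, one_pos, fun y hy t ht ht1 => ?_⟩
      have hne : ¬ (h y ≤ 0) := by
        intro hc
        exact absurd (Set.mem_inter hy hc) (by rw [hS']; exact notMem_empty y)
      push_neg at hne
      nlinarith [hgnn y]
    · obtain ⟨x0, hx0S, hx0min⟩ := hS.exists_isMinOn hS' ((quad_cont Astar).continuousOn)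
      have hc : 0 < g x0 := hgpos x0 hx0S
      have hCnn : 0 ≤ C := le_trans (norm_nonneg _) (hC x0 hx0S.1)
      refine ⟨g x0 / (C + 1), by positivity, fun y hy t ht ht1 => ?_⟩
      by_cases hhy : 0 ≤ h y
      · nlinarith [hgnn y]
      · push_neg at hhy
        have h1 : g x0 ≤ g y := hx0min ⟨hy, le_of_lt hhy⟩
        have h2 : |h y| ≤ C := by simpa [Real.norm_eq_abs] using hC y hy
        have h3 : -C ≤ h y := neg_le_of_abs_le h2
        have hC1 : (0:ℝ) < C + 1 := by linarith
        rw [le_div_iff₀ hC1] at ht1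
        nlinarith
  obtain ⟨t0, ht0, hkey⟩ := key
  refine ⟨t0, ht0, fun t ht ht1 x => ?_⟩
  rw [hexpand]
  by_cases hx : x = 0
  · simp [hx, hg, hh]
  · have hnx : 0 < ‖x‖ := norm_pos_iff.mpr hx
    set y := ‖x‖⁻¹ • x with hy
    have hyS : y ∈ sphere (0 : Fin m → ℝ) 1 := by
      rw [mem_sphere_zero_iff_norm, hy, norm_smul, norm_inv, norm_norm,
        inv_mul_cancel₀ hnx.ne']
    have hxy : x = ‖x‖ • y := by rw [hy, smul_inv_smul₀ hnx.ne']
    have hquad : ∀ M : Matrix (Fin m) (Fin m) ℝ,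
        x ⬝ᵥ (M *ᵥ x) = ‖x‖ ^ 2 * (y ⬝ᵥ (M *ᵥ y)) := by
      intro M
      have h8 := quad_smul M ‖x‖ y
      rw [← hxy] at h8
      exact h8
    have h9 := hkey y hyS t ht ht1
    have hgx : g x = ‖x‖ ^ 2 * g y := hquad Astar
    have hhx : h x = ‖x‖ ^ 2 * h y := hquad _
    rw [hgx, hhx]
    nlinarith [sq_nonneg ‖x‖]

/-- Example 2.2: for `A* ∈ 𝒮₊^m` of rank `r* < m` with `K` a matrix whose
columns form a basis of `ker A*`, the limit set of
`U_T = {w ∈ 𝒮^m : A* + T^{-1/2} w ∈ 𝒮₊^m}` equals `{w ∈ 𝒮^m : K' w K ∈ 𝒮₊^{m-r*}}`. -/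
theorem limSet_posSemidef (m rstar : ℕ) (hr : rstar < m)
    (Astar : Matrix (Fin m) (Fin m) ℝ) (hAstar : Astar.PosSemidef)
    (hrank : Astar.rank = rstar)
    (K : Matrix (Fin m) (Fin (m - rstar)) ℝ)
    (hKli : LinearIndependent ℝ (fun j => (fun i => K i j : Fin m → ℝ)))
    (hKspan : Submodule.span ℝ (Set.range (fun j => (fun i => K i j : Fin m → ℝ)))
      = LinearMap.ker Astar.mulVecLin) :
    limSetMat (fun T =>
        {w : Matrix (Fin m) (Fin m) ℝ | w.IsSymm ∧
          (Astar + T ^ (-(1/2 : ℝ)) • w).PosSemidef}) =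
      {w : Matrix (Fin m) (Fin m) ℝ | w.IsSymm ∧ (Kᵀ * w * K).PosSemidef} := by
  have hker_iff : ∀ x : Fin m → ℝ, Astar *ᵥ x = 0 ↔ ∃ c, K *ᵥ c = x := by
    intro x
    constructor
    · intro hx
      have hxm : x ∈ LinearMap.ker Astar.mulVecLin := by
        rw [LinearMap.mem_ker, mulVecLin_apply]; exact hx
      rw [← hKspan] at hxm
      obtain ⟨c, hc⟩ := (Submodule.mem_span_range_iff_exists_fun ℝ).mp hxm
      exact ⟨c, by rw [← sum_smul_col]; exact hc⟩
    · rintro ⟨c, rfl⟩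
      have hxm : K *ᵥ c ∈ Submodule.span ℝ
          (Set.range (fun j => (fun i => K i j : Fin m → ℝ))) := by
        rw [← sum_smul_col]
        exact Submodule.sum_mem _ fun j _ =>
          Submodule.smul_mem _ _ (Submodule.subset_span ⟨j, rfl⟩)
      rw [hKspan, LinearMap.mem_ker, mulVecLin_apply] at hxm
      exact hxm
  ext w
  simp only [limSetMat, frobThick, mem_iInter, mem_iUnion, mem_setOf_eq]
  constructor
  · intro hw
    have key : ∀ δ : ℝ, 0 < δ → ∃ a : Matrix (Fin m) (Fin m) ℝ, a.IsSymm ∧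
        (∃ T : ℝ, 0 < T ∧ (Astar + T ^ (-(1/2 : ℝ)) • a).PosSemidef) ∧
        frobNorm (w - a) < δ := by
      intro δ hδ
      obtain ⟨N, hN⟩ := hw δ hδ
      have hT : (0:ℝ) < (N:ℝ) + 1 := by positivity
      obtain ⟨a, ha, hfa⟩ := hN ((N:ℝ)+1) hT (by linarith)
      exact ⟨a, ha.1, ⟨(N:ℝ)+1, hT, ha.2⟩, hfa⟩
    have hsymm : w.IsSymm := by
      rw [Matrix.IsSymm]
      ext i j
      rw [transpose_apply]
      by_contra hne
      have hd : 0 < |w j i - w i j| := abs_pos.mpr (sub_ne_zero.mpr hne)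
      obtain ⟨a, haS, -, hfa⟩ := key (|w j i - w i j| / 4) (by positivity)
      have h1 : |(w - a) j i| ≤ frobNorm (w - a) := frob_entry_le _ _ _
      have h2 : |(w - a) i j| ≤ frobNorm (w - a) := frob_entry_le _ _ _
      have ha' : a j i = a i j := by conv_lhs => rw [← haS, transpose_apply]
      have e : w j i - w i j = (w - a) j i - (w - a) i j := by
        simp only [Matrix.sub_apply, ha']; ring
      have t1 : |(w - a) j i + -((w - a) i j)| ≤ |(w - a) j i| + |-((w - a) i j)| :=
        abs_add_le _ _
      rw [abs_neg, ← sub_eq_add_neg, ← e] at t1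
      linarith
    refine ⟨hsymm, posSemidef_iff_dotProduct_mulVec.mpr ⟨?_, ?_⟩⟩
    · rw [Matrix.IsHermitian, conjTranspose_eq_transpose_of_trivial, transpose_mul,
        transpose_mul, transpose_transpose, hsymm, Matrix.mul_assoc]
    · intro v
      rw [star_trivial, quad_K]
      set x := K *ᵥ v with hxdef
      have hAx : Astar *ᵥ x = 0 := (hker_iff x).mpr ⟨v, rfl⟩
      by_contra hneg
      push_neg at hneg
      set q := x ⬝ᵥ (w *ᵥ x) with hq
      set s := x ⬝ᵥ x with hs0
      have hs : 0 ≤ s := dotProduct_self_nonneg' x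
      set δ := (-q) / (s + 1) with hδdef
      have hδpos : 0 < δ := div_pos (neg_pos.mpr hneg) (by linarith)
      obtain ⟨a, haS, ⟨T, hT, hPSD⟩, hfa⟩ := key δ hδpos
      have htpos : 0 < T ^ (-(1/2:ℝ)) := Real.rpow_pos_of_pos hT _
      have h1 : 0 ≤ x ⬝ᵥ ((Astar + T ^ (-(1/2 : ℝ)) • a) *ᵥ x) := by
        simpa using hPSD.dotProduct_mulVec_nonneg x
      have h2 : x ⬝ᵥ ((Astar + T ^ (-(1/2 : ℝ)) • a) *ᵥ x)
          = T ^ (-(1/2:ℝ)) * (x ⬝ᵥ (a *ᵥ x)) := by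
        rw [add_mulVec, dotProduct_add, hAx, dotProduct_zero, smul_mulVec,
          dotProduct_smul, smul_eq_mul, zero_add]
      rw [h2] at h1
      have h3 : 0 ≤ x ⬝ᵥ (a *ᵥ x) := nonneg_of_mul_nonneg_right h1 htpos
      have h4 : |x ⬝ᵥ ((w - a) *ᵥ x)| ≤ frobNorm (w - a) * s := frob_quad_bound _ _
      have h5 : x ⬝ᵥ ((w - a) *ᵥ x) = q - x ⬝ᵥ (a *ᵥ x) := by
        rw [sub_mulVec, dotProduct_sub]
      rw [h5] at h4
      have h6 : frobNorm (w - a) * s ≤ δ * s := mul_le_mul_of_nonneg_right hfa.le hs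
      have habs := (abs_le.mp h4).1
      have h7 : δ * (s + 1) = -q :=
        div_mul_cancel₀ _ (by linarith : s + 1 ≠ 0)
      have h8 : δ * (s + 1) = δ * s + δ := by ring
      linarith
  · rintro ⟨hsymm, hpsd⟩
    intro δ hδ
    have hker : ∀ x : Fin m → ℝ, Astar *ᵥ x = 0 → 0 ≤ x ⬝ᵥ (w *ᵥ x) := by
      intro x hx
      obtain ⟨c, rfl⟩ := (hker_iff x).mp hx
      have h := hpsd.dotProduct_mulVec_nonneg c
      rw [star_trivial, quad_K] at h
      exact h
    set ε : ℝ := δ / (Real.sqrt m + 1) with hεdef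
    have hsm : 0 ≤ Real.sqrt m := Real.sqrt_nonneg _
    have hε : 0 < ε := div_pos hδ (by linarith)
    obtain ⟨t0, ht0, hkey⟩ := exists_t0 Astar w hAstar hker hε
    refine ⟨⌈(t0⁻¹)^2⌉₊, fun T hT hTN => ?_⟩
    have hεsymm : (w + ε • (1 : Matrix (Fin m) (Fin m) ℝ)).IsSymm := by
      rw [Matrix.IsSymm, transpose_add, transpose_smul, transpose_one, hsymm]
    have htpos : 0 < T ^ (-(1/2:ℝ)) := Real.rpow_pos_of_pos hT _
    have htle : T ^ (-(1/2:ℝ)) ≤ t0 := by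
      have h1 : T ^ (-(1/2:ℝ)) = (Real.sqrt T)⁻¹ := by
        rw [Real.rpow_neg hT.le, Real.sqrt_eq_rpow]
      have h2 : t0⁻¹ ≤ Real.sqrt T := by
        have h3 : ((t0⁻¹)^2 : ℝ) ≤ T := le_trans (Nat.le_ceil _) hTN
        calc t0⁻¹ = Real.sqrt ((t0⁻¹)^2) := (Real.sqrt_sq (by positivity)).symm
          _ ≤ Real.sqrt T := Real.sqrt_le_sqrt h3
      have hsT : 0 < Real.sqrt T := Real.sqrt_pos.mpr hT
      rw [h1, inv_le_comm₀ hsT ht0]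
      exact h2
    have hq := hkey _ htpos htle
    refine ⟨w + ε • 1, ⟨hεsymm, posSemidef_iff_dotProduct_mulVec.mpr ⟨?_, ?_⟩⟩, ?_⟩
    · rw [Matrix.IsHermitian, conjTranspose_eq_transpose_of_trivial, transpose_add,
        transpose_smul]
      have hAt : Astarᵀ = Astar := by
        rw [← conjTranspose_eq_transpose_of_trivial]; exact hAstar.1
      rw [hAt, hεsymm]
    · intro x
      rw [star_trivial]
      exact hq x
    · have hsub : w - (w + ε • (1 : Matrix (Fin m) (Fin m) ℝ)) = -(ε • 1) := by abel
      have hfro : frobNorm (w - (w + ε • (1 : Matrix (Fin m) (Fin m) ℝ)))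
          = ε * Real.sqrt m := by
        rw [hsub, frobNorm]
        have hent : ∀ i j : Fin m, ((-(ε • (1 : Matrix (Fin m) (Fin m) ℝ))) i j) ^ 2
            = ε ^ 2 * (if i = j then 1 else 0) := by
          intro i j
          by_cases hij : i = j <;>
            simp [hij, Matrix.one_apply, Matrix.smul_apply, Matrix.neg_apply] <;> ring
        simp only [hent]
        have hsum : ∑ i : Fin m, ∑ j : Fin m, ε ^ 2 * (if i = j then (1:ℝ) else 0)
            = (m : ℝ) * ε ^ 2 := by
          simp [← Finset.mul_sum, Finset.sum_ite_eq, mul_comm]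
        rw [hsum, Real.sqrt_mul (Nat.cast_nonneg m), Real.sqrt_sq hε.le, mul_comm]
      rw [hfro, hεdef]
      rw [div_mul_eq_mul_div, div_lt_iff₀ (by linarith : (0:ℝ) < Real.sqrt m + 1)]
      nlinarith
end

section
/- Let $A^* \in \mathcal{S}_+^m$ be a positive semi-definite symmetric $m \times m$ matrix, let $K$ be a matrix whose columns form a basis of $\ker A^*$, and let $w \in \mathcal{S}^m$ be a symmetric matrix with $K' w K$ positive semi-definite. Then for all sufficiently large $T > 0$, the matrix $A^* + T^{-1/2}(w + T^{-1/4} I_m)$ is positive semi-definite. -/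
open Matrix

open scoped RealInnerProductSpace

section aux

variable {m : ℕ}

/-- key epsilon lemma -/
lemma exists_eps (m : ℕ) (Astar : Matrix (Fin m) (Fin m) ℝ) (hA : Astar.PosSemidef) :
    ∃ ε > (0:ℝ), ∀ x : EuclideanSpace ℝ (Fin m), ∃ y v : EuclideanSpace ℝ (Fin m),
      x = y + v ∧ Matrix.toEuclideanLin Astar v = 0 ∧ ⟪y, v⟫ = 0 ∧
      ε * ‖y‖^2 ≤ ⟪y, Matrix.toEuclideanLin Astar y⟫ := by
  classical
  set E := EuclideanSpace ℝ (Fin m)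
  set L : E →ₗ[ℝ] E := Matrix.toEuclideanLin Astar with hL
  set N : Submodule ℝ E := LinearMap.ker L with hN
  have hinner : ∀ a b : E, ⟪a, L b⟫ = (WithLp.equiv 2 _ a) ⬝ᵥ Astar *ᵥ (WithLp.equiv 2 _ b) := by
    intro a b; rw [EuclideanSpace.inner_eq_star_dotProduct, dotProduct_comm]; rfl
  have hpsd : ∀ a : E, 0 ≤ ⟪a, L a⟫ := by
    intro a
    have := hA.dotProduct_mulVec_nonneg (WithLp.equiv 2 _ a)
    rwa [star_trivial, ← hinner] at this
  have key : ∃ ε > (0:ℝ), ∀ y : E, y ∈ Nᗮ → ε * ‖y‖^2 ≤ ⟪y, L y⟫ := by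
    rcases Set.eq_empty_or_nonempty ((Nᗮ : Set E) ∩ Metric.sphere 0 1) with hS | hS
    · refine ⟨1, one_pos, fun y hy => ?_⟩
      rcases eq_or_ne y 0 with rfl | hy0
      · simp
      · exfalso
        refine Set.eq_empty_iff_forall_notMem.mp hS (‖y‖⁻¹ • y)
          ⟨Submodule.smul_mem _ _ hy, ?_⟩
        simp [norm_smul, inv_mul_cancel₀ (norm_ne_zero_iff.mpr hy0)]
    · have hSc : IsCompact ((Nᗮ : Set E) ∩ Metric.sphere 0 1) :=
        (isCompact_sphere (0:E) 1).inter_left (Submodule.closed_of_finiteDimensional _)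
      have hf : Continuous fun y : E => ⟪y, L y⟫ :=
        continuous_id.inner (L.continuous_of_finiteDimensional.comp continuous_id)
      obtain ⟨y0, hy0S, hmin⟩ := hSc.exists_isMinOn hS hf.continuousOn
      have hy0O : y0 ∈ Nᗮ := hy0S.1
      have hy0n : ‖y0‖ = 1 := by simpa using hy0S.2
      have hy0ne : y0 ≠ 0 := by intro h; rw [h] at hy0n; simp at hy0n
      have hpos : 0 < ⟪y0, L y0⟫ := by
        rcases lt_or_eq_of_le (hpsd y0) with h | h
        · exact h
        · exfalso
          have h0 : L y0 = 0 := by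
            have := (hA.dotProduct_mulVec_zero_iff (WithLp.equiv 2 _ y0)).mp ?_
            · apply (WithLp.equiv 2 _).injective
              exact this
            · rw [star_trivial, ← hinner, ← h]
          have : y0 ∈ N := by simpa [hN] using h0
          have := hy0O y0 this
          rw [real_inner_self_eq_norm_sq, hy0n] at this
          norm_num at this
      refine ⟨⟪y0, L y0⟫, hpos, fun y hy => ?_⟩
      rcases eq_or_ne y 0 with rfl | hyne
      · simp
      · have hyn : 0 < ‖y‖ := norm_pos_iff.mpr hyne
        have hu : (‖y‖⁻¹ • y) ∈ (Nᗮ : Set E) ∩ Metric.sphere 0 1 :=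
          ⟨Submodule.smul_mem _ _ hy, by
            simp [norm_smul, inv_mul_cancel₀ (ne_of_gt hyn)]⟩
        have h2 : ⟪(‖y‖⁻¹ • y : E), L (‖y‖⁻¹ • y)⟫ = ‖y‖⁻¹^2 * ⟪y, L y⟫ := by
          rw [_root_.map_smul]; erw [inner_smul_left, inner_smul_right]; simp only [conj_trivial]; ring
        have h1 : ⟪y0, L y0⟫ ≤ ‖y‖⁻¹^2 * ⟪y, L y⟫ := le_trans (hmin hu) (le_of_eq h2)
        have hy2 : (0:ℝ) < ‖y‖^2 := by positivity
        calc ⟪y0, L y0⟫ * ‖y‖^2 ≤ (‖y‖⁻¹^2 * ⟪y, L y⟫) * ‖y‖^2 :=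
              mul_le_mul_of_nonneg_right h1 hy2.le
          _ = ⟪y, L y⟫ := by field_simp
  obtain ⟨ε, hε, hkey⟩ := key
  refine ⟨ε, hε, fun x => ?_⟩
  obtain ⟨v, hvN, y, hyN, hx⟩ := N.exists_add_mem_mem_orthogonal x
  refine ⟨y, v, by rw [hx, add_comm], by simpa [hN] using hvN, ?_, hkey y hyN⟩
  have := hyN v hvN
  rwa [real_inner_comm] at this

end aux

lemma arith_key (ε C s q a b Iy A1 A2 A3 : ℝ)
    (hkey : ε * a ^ 2 ≤ Iy)
    (f2 : s * -(C * a ^ 2) ≤ s * A1)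
    (f3 : s * -(C * a * b) ≤ s * A2)
    (f4 : 0 ≤ s * A3)
    (f5 : 0 ≤ C ^ 2 * a ^ 2 * q - 2 * (C * a * b) * s + b ^ 2 * (s * q))
    (f6 : s * C * a ^ 2 ≤ ε / 2 * a ^ 2)
    (f7 : C ^ 2 * q * a ^ 2 ≤ ε / 2 * a ^ 2)
    (f8 : 0 ≤ s * q * a ^ 2) :
    0 ≤ Iy + s * (A1 + 2 * A2 + A3) + s * q * (a ^ 2 + b ^ 2) := by
  linarith

set_option maxHeartbeats 1000000 in
lemma aux_posSemidef (m : ℕ) (Astar : Matrix (Fin m) (Fin m) ℝ) (hAstar : Astar.PosSemidef)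
    (w : Matrix (Fin m) (Fin m) ℝ) (hw : w.IsSymm)
    (hker : ∀ v : Fin m → ℝ, Astar *ᵥ v = 0 → 0 ≤ v ⬝ᵥ w *ᵥ v) :
    ∃ s0 > (0:ℝ), ∀ s : ℝ, 0 < s → s ≤ s0 →
      (Astar + s • w + (s * Real.sqrt s) • (1 : Matrix (Fin m) (Fin m) ℝ)).PosSemidef := by
  classical
  obtain ⟨ε, hε, hdec⟩ := exists_eps m Astar hAstar
  set E := EuclideanSpace ℝ (Fin m)
  set L : E →ₗ[ℝ] E := Matrix.toEuclideanLin Astar with hL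
  set W : E →ₗ[ℝ] E := Matrix.toEuclideanLin w with hW
  set Wc : E →L[ℝ] E := LinearMap.toContinuousLinearMap W with hWc
  set C : ℝ := ‖Wc‖ + 1 with hC
  have hC0 : 0 < C := by
    have : (0:ℝ) ≤ ‖Wc‖ := norm_nonneg _
    simp only [hC]; linarith
  have hCn : ‖Wc‖ ≤ C := by rw [hC]; linarith [norm_nonneg Wc]
  have hWbound : ∀ a b : E, |⟪a, W b⟫| ≤ C * ‖a‖ * ‖b‖ := by
    intro a b
    calc |⟪a, W b⟫| ≤ ‖a‖ * ‖W b‖ := abs_real_inner_le_norm a (W b)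
      _ ≤ ‖a‖ * (C * ‖b‖) := by
          have : ‖W b‖ ≤ C * ‖b‖ := le_trans (Wc.le_opNorm b)
            (mul_le_mul_of_nonneg_right hCn (norm_nonneg b))
          exact mul_le_mul_of_nonneg_left this (norm_nonneg a)
      _ = C * ‖a‖ * ‖b‖ := by ring
  have h2C : (0:ℝ) < 2 * C := by linarith
  have h2C2 : (0:ℝ) < 2 * C^2 := by nlinarith
  refine ⟨min (ε / (2 * C)) ((ε / (2 * C^2))^2),
    lt_min (div_pos hε h2C) (pow_pos (div_pos hε h2C2) 2), fun s hs hs0 => ?_⟩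
  have hsC : s * C ≤ ε / 2 := by
    have h1 : s ≤ ε / (2 * C) := le_trans hs0 (min_le_left _ _)
    calc s * C ≤ (ε / (2 * C)) * C := mul_le_mul_of_nonneg_right h1 hC0.le
      _ = ε / 2 := by field_simp
  have hsqC : C^2 * Real.sqrt s ≤ ε / 2 := by
    have h1 : s ≤ (ε / (2 * C^2))^2 := le_trans hs0 (min_le_right _ _)
    have h2 : Real.sqrt s ≤ ε / (2 * C^2) := by
      calc Real.sqrt s ≤ Real.sqrt ((ε / (2 * C^2))^2) := Real.sqrt_le_sqrt h1
        _ = ε / (2 * C^2) := Real.sqrt_sq (by positivity)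
    calc C^2 * Real.sqrt s ≤ C^2 * (ε / (2 * C^2)) :=
          mul_le_mul_of_nonneg_left h2 (by positivity)
      _ = ε / 2 := by field_simp
  have hAsymm : Astar.IsSymm := by
    rw [Matrix.IsSymm, ← conjTranspose_eq_transpose_of_trivial, hAstar.1]
  rw [Matrix.posSemidef_iff_dotProduct_mulVec]
  constructor
  · -- hermitian
    have hsymtot : (Astar + s • w + (s * Real.sqrt s) • (1 : Matrix (Fin m) (Fin m) ℝ)).IsSymm :=
      (hAsymm.add (hw.smul s)).add ((Matrix.isSymm_one).smul (s * Real.sqrt s))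
    rw [Matrix.IsHermitian, conjTranspose_eq_transpose_of_trivial]
    exact hsymtot
  · intro x
    rw [star_trivial]
    set x' : E := (WithLp.equiv 2 (Fin m → ℝ)).symm x with hx'
    have hform : x ⬝ᵥ (Astar + s • w + (s * Real.sqrt s) • 1) *ᵥ x
        = ⟪x', L x'⟫ + s * ⟪x', W x'⟫ + (s * Real.sqrt s) * ⟪x', x'⟫ := by
      have e1 : ∀ a b : E, ⟪a, b⟫ = (WithLp.equiv 2 _ a) ⬝ᵥ (WithLp.equiv 2 _ b) := fun a b => by rw [EuclideanSpace.inner_eq_star_dotProduct, dotProduct_comm]; rfl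
      have e2 : ∀ a b : E, ⟪a, L b⟫ = (WithLp.equiv 2 _ a) ⬝ᵥ Astar *ᵥ (WithLp.equiv 2 _ b) :=
        fun a b => by rw [EuclideanSpace.inner_eq_star_dotProduct, dotProduct_comm]; rfl
      have e3 : ∀ a b : E, ⟪a, W b⟫ = (WithLp.equiv 2 _ a) ⬝ᵥ w *ᵥ (WithLp.equiv 2 _ b) :=
        fun a b => by rw [EuclideanSpace.inner_eq_star_dotProduct, dotProduct_comm]; rfl
      rw [e2 x' x', e3 x' x', e1 x' x']
      show x ⬝ᵥ _ *ᵥ x = x ⬝ᵥ Astar *ᵥ x + s * (x ⬝ᵥ w *ᵥ x) + s * Real.sqrt s * (x ⬝ᵥ x)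
      simp [add_mulVec, smul_mulVec, dotProduct_add, dotProduct_smul, one_mulVec,
        smul_eq_mul]
    rw [hform]
    obtain ⟨y, v, hxd, hv0, hyv, hkey⟩ := hdec x'
    have hvW : 0 ≤ ⟪v, W v⟫ := by
      have : Astar *ᵥ (WithLp.equiv 2 _ v) = 0 := by
        have := congrArg (WithLp.equiv 2 (Fin m → ℝ)) hv0
        exact this
      rw [EuclideanSpace.inner_eq_star_dotProduct, dotProduct_comm]
      exact hker _ this
    -- symmetry of W for cross terms
    have hWsymm : ∀ a b : E, ⟪a, W b⟫ = ⟪b, W a⟫ := by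
      intro a b
      have e3 : ∀ a b : E, ⟪a, W b⟫ = (WithLp.equiv 2 _ a) ⬝ᵥ w *ᵥ (WithLp.equiv 2 _ b) :=
        fun a b => by rw [EuclideanSpace.inner_eq_star_dotProduct, dotProduct_comm]; rfl
      rw [e3, e3]
      conv_lhs => rw [Matrix.dotProduct_mulVec, ← hw, vecMul_transpose, dotProduct_comm]
    -- L kills v
    have hLv : ∀ a : E, ⟪a, L v⟫ = 0 := fun a => by rw [hv0, inner_zero_right]
    have hLsymm : ∀ a b : E, ⟪a, L b⟫ = ⟪b, L a⟫ := by
      intro a b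
      have e2 : ∀ a b : E, ⟪a, L b⟫ = (WithLp.equiv 2 _ a) ⬝ᵥ Astar *ᵥ (WithLp.equiv 2 _ b) :=
        fun a b => by rw [EuclideanSpace.inner_eq_star_dotProduct, dotProduct_comm]; rfl
      rw [e2, e2]
      conv_lhs => rw [Matrix.dotProduct_mulVec, ← hAsymm, vecMul_transpose, dotProduct_comm]
    clear_value x'
    set a := ‖y‖
    set b := ‖v‖
    have hLx : ⟪y + v, L (y + v)⟫ = ⟪y, L y⟫ := by
      rw [inner_add_left, _root_.map_add, inner_add_right, inner_add_right, hLv, hLv,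
        hLsymm v y, hLv]
      ring
    have hWx : ⟪y + v, W (y + v)⟫ = ⟪y, W y⟫ + 2 * ⟪y, W v⟫ + ⟪v, W v⟫ := by
      rw [inner_add_left, _root_.map_add, inner_add_right, inner_add_right, hWsymm v y]
      ring
    have hxx : ⟪y + v, (y + v : E)⟫ = a^2 + b^2 := by
      rw [real_inner_add_add_self, hyv, real_inner_self_eq_norm_sq, real_inner_self_eq_norm_sq]
      ring
    have hx2 : x' = y + v := hxd
    rw [hx2, hLx, hWx, hxx]
    have h1 : -(C * a^2) ≤ ⟪y, W y⟫ :=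
      neg_le_of_abs_le ((hWbound y y).trans (le_of_eq (by rw [sq, mul_assoc])))
    have h2 : -(C * a * b) ≤ ⟪y, W v⟫ := neg_le_of_abs_le (hWbound y v)
    have hss : Real.sqrt s ^ 2 = s := Real.sq_sqrt hs.le
    have hss3 : Real.sqrt s ^ 3 = s * Real.sqrt s := by
      rw [pow_succ, hss]
    have hsq : 0 ≤ Real.sqrt s := Real.sqrt_nonneg s
    have ha : 0 ≤ a := norm_nonneg y
    have hb : 0 ≤ b := norm_nonneg v
    have f2 := mul_le_mul_of_nonneg_left h1 hs.le
    have f3 := mul_le_mul_of_nonneg_left h2 hs.le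
    have f4 : 0 ≤ s * ⟪v, W v⟫ := mul_nonneg hs.le hvW
    have hexp : Real.sqrt s * (C*a - Real.sqrt s*b)^2
        = C^2*a^2*Real.sqrt s - 2*(C*a*b)*Real.sqrt s^2 + b^2*Real.sqrt s^3 := by ring
    have f5 : 0 ≤ C^2*a^2*Real.sqrt s - 2*(C*a*b)*s + b^2*(s*Real.sqrt s) := by
      have h := mul_nonneg hsq (sq_nonneg (C*a - Real.sqrt s*b))
      rw [hexp, hss, hss3] at h
      linarith [h]
    have f6 := mul_le_mul_of_nonneg_right hsC (sq_nonneg a)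
    have f7 := mul_le_mul_of_nonneg_right hsqC (sq_nonneg a)
    have f8 : 0 ≤ s*Real.sqrt s*a^2 := by positivity
    exact arith_key ε C s (Real.sqrt s) a b _ _ _ _ hkey f2 f3 f4 f5 f6 f7 f8

/-- if `A* ∈ 𝒮₊^m`, `K` has columns forming a basis of `ker A*`, `w` is symmetric
and `K' w K` is positive semi-definite, then for all sufficiently large `T > 0`,
`A* + T^{-1/2}(w + T^{-1/4} I_m)` is positive semi-definite. -/
theorem eventually_posSemidef (m r : ℕ)
    (Astar : Matrix (Fin m) (Fin m) ℝ) (hAstar : Astar.PosSemidef)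
    (K : Matrix (Fin m) (Fin r) ℝ)
    (hKli : LinearIndependent ℝ (fun j => (fun i => K i j : Fin m → ℝ)))
    (hKspan : Submodule.span ℝ (Set.range (fun j => (fun i => K i j : Fin m → ℝ)))
      = LinearMap.ker Astar.mulVecLin)
    (w : Matrix (Fin m) (Fin m) ℝ) (hw : w.IsSymm)
    (hKwK : (Kᵀ * w * K).PosSemidef) :
    ∃ T0 : ℝ, 0 < T0 ∧ ∀ T : ℝ, T0 ≤ T →
      (Astar + T ^ (-(1/2 : ℝ)) • (w + T ^ (-(1/4 : ℝ)) • (1 : Matrix (Fin m) (Fin m) ℝ))).PosSemidef := by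
  have hker : ∀ v : Fin m → ℝ, Astar *ᵥ v = 0 → 0 ≤ v ⬝ᵥ w *ᵥ v := by
    intro v hv
    have hvmem : v ∈ LinearMap.ker Astar.mulVecLin := by
      simpa [LinearMap.mem_ker, Matrix.mulVecLin_apply] using hv
    rw [← hKspan] at hvmem
    have hrangeset : Set.range Kᵀ = Set.range (fun j => (fun i => K i j : Fin m → ℝ)) := rfl
    have hrange : v ∈ LinearMap.range K.mulVecLin := by
      rw [Matrix.range_mulVecLin]
      exact hvmem
    obtain ⟨z, hz⟩ := hrange
    have hz' : K *ᵥ z = v := by rw [← hz]; rfl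
    have h0 := hKwK.dotProduct_mulVec_nonneg z
    rw [star_trivial] at h0
    have heq : z ⬝ᵥ (Kᵀ * w * K) *ᵥ z = v ⬝ᵥ w *ᵥ v := by
      rw [← Matrix.mulVec_mulVec, ← Matrix.mulVec_mulVec, Matrix.dotProduct_mulVec,
        vecMul_transpose, hz']
    rwa [heq] at h0
  obtain ⟨s0, hs0pos, hs0⟩ := aux_posSemidef m Astar hAstar w hw hker
  refine ⟨(s0⁻¹ + 1)^2, by positivity, fun T hT => ?_⟩
  have hT0 : (0:ℝ) < (s0⁻¹ + 1)^2 := by positivity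
  have hTpos : 0 < T := lt_of_lt_of_le hT0 hT
  set s := T ^ (-(1/2 : ℝ)) with hsdef
  have hspos : 0 < s := Real.rpow_pos_of_pos hTpos _
  have hsqrt : Real.sqrt s = T ^ (-(1/4 : ℝ)) := by
    rw [hsdef, Real.sqrt_eq_rpow, ← Real.rpow_mul hTpos.le]
    norm_num
  have hsle : s ≤ s0 := by
    have hpos1 : (0:ℝ) < s0⁻¹ + 1 := by positivity
    have h1 : s0⁻¹ + 1 ≤ T ^ ((1/2 : ℝ)) := by
      have h2 := Real.rpow_le_rpow hT0.le hT (by norm_num : (0:ℝ) ≤ (1/2:ℝ))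
      have h3 : ((s0⁻¹ + 1)^2) ^ ((1/2 : ℝ)) = s0⁻¹ + 1 := by
        rw [← Real.rpow_natCast (s0⁻¹ + 1) 2, ← Real.rpow_mul hpos1.le]
        norm_num
      rwa [h3] at h2
    have h4 : s = (T ^ ((1/2 : ℝ)))⁻¹ := by
      rw [hsdef, ← Real.rpow_neg hTpos.le]
    rw [h4]
    calc (T ^ ((1/2 : ℝ)))⁻¹ ≤ (s0⁻¹ + 1)⁻¹ := inv_anti₀ hpos1 h1
      _ ≤ (s0⁻¹)⁻¹ := inv_anti₀ (by positivity) (by linarith)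
      _ = s0 := inv_inv s0
  have key := hs0 s hspos hsle
  have hconv : s • (w + T ^ (-(1/4 : ℝ)) • (1 : Matrix (Fin m) (Fin m) ℝ))
      = s • w + (s * Real.sqrt s) • (1 : Matrix (Fin m) (Fin m) ℝ) := by
    rw [smul_add, smul_smul, hsqrt]
  rw [hconv, ← add_assoc]
  exact key
end

section
/- Fix $D_{11}^* > 0$ and $\rho > 0$. For $T > 0$ let $U_T = \{(w_1, w_2, w_3) \in \mathbb{R}^2 \times [0,\infty) : (D_{11}^* + T^{-1/2} w_1) T^{-\rho/2} w_3 - T^{-1} w_2^2 \geq 0\}$ and $U = \bigcap_{\delta>0}\bigcup_{N\geq1}\bigcap_{T\geq N}(U_T)^\delta$. Then: if $\rho < 2$, $U = \{(w_1,w_2,w_3) \in \mathbb{R}^3 : w_3 \geq 0\}$; if $\rho = 2$, $U = \{(w_1,w_2,w_3) \in \mathbb{R}^3 : D_{11}^* w_3 \geq w_2^2\}$; if $\rho > 2$, $U = \{(w_1,w_2,w_3) \in \mathbb{R}^3 : w_3 \geq 0, w_2 = 0\}$. -/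
open Metric Set Filter

section Helpers
variable {Us : ℝ → Set (EuclideanSpace ℝ (Fin 3))} {w : EuclideanSpace ℝ (Fin 3)}

lemma aux_coord (x y : EuclideanSpace ℝ (Fin 3)) (i : Fin 3) : |x i - y i| ≤ dist x y := by
  rw [EuclideanSpace.dist_eq, ← Real.dist_eq]
  have h1 : dist (x i) (y i) ^ 2 ≤ ∑ j, dist (x j) (y j) ^ 2 :=
    Finset.single_le_sum (f := fun j => dist (x j) (y j) ^ 2)
      (fun j _ => sq_nonneg _) (Finset.mem_univ i)
  have := Real.sqrt_le_sqrt h1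
  rwa [Real.sqrt_sq dist_nonneg] at this

lemma pert (w : EuclideanSpace ℝ (Fin 3)) (c : ℝ) :
    ∃ u : EuclideanSpace ℝ (Fin 3), u 0 = w 0 ∧ u 1 = w 1 ∧ u 2 = w 2 + c ∧ dist w u = |c| := by
  refine ⟨w + EuclideanSpace.single 2 c, ?_, ?_, ?_, ?_⟩
  · simp [PiLp.add_apply, EuclideanSpace.single_apply]
  · simp [PiLp.add_apply, EuclideanSpace.single_apply]
  · simp [PiLp.add_apply, EuclideanSpace.single_apply]
  · rw [EuclideanSpace.dist_eq, Fin.sum_univ_three]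
    simp [Real.dist_eq, PiLp.add_apply, EuclideanSpace.single_apply]
    rw [Real.sqrt_sq_eq_abs]

lemma mem_limSet_of (h : ∀ δ > (0:ℝ), ∃ a : ℝ, ∀ T : ℝ, 0 < T → a ≤ T →
    ∃ u ∈ Us T, dist w u < δ) : w ∈ limSet (Set.Ioi 0) Us := by
  simp only [limSet, mem_iInter, mem_iUnion]
  intro δ hδ
  obtain ⟨a, ha⟩ := h δ hδ
  refine ⟨⌈a⌉₊, fun T => ?_⟩
  simp only [mem_iInter, mem_Ioi]
  intro hT hN
  exact Metric.mem_thickening_iff.2 (by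
    obtain ⟨u, hu, hd⟩ := ha T hT (le_trans (Nat.le_ceil a) hN)
    exact ⟨u, hu, hd⟩)

lemma extract (h : w ∈ limSet (Set.Ioi 0) Us) (δ : ℝ) (hδ : 0 < δ) (C : ℝ) :
    ∃ T : ℝ, C ≤ T ∧ 0 < T ∧ ∃ u ∈ Us T, dist w u < δ := by
  simp only [limSet, mem_iInter, mem_iUnion] at h
  obtain ⟨N, hN⟩ := h δ hδ
  have hN' := hN (max (N:ℝ) C + 1)
  simp only [mem_iInter, mem_Ioi] at hN'
  have h0 : (0:ℝ) ≤ (N:ℝ) := Nat.cast_nonneg N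
  have hmC := le_max_right (N:ℝ) C
  have hmN := le_max_left (N:ℝ) C
  have hT : (0:ℝ) < max (N:ℝ) C + 1 := by linarith
  have hmem := hN' hT (by linarith)
  obtain ⟨u, hu, hd⟩ := Metric.mem_thickening_iff.1 hmem
  exact ⟨max (N:ℝ) C + 1, by linarith, hT, u, hu, hd⟩

lemma rpow_mul_ev_lt (e : ℝ) (he : 0 < e) (M c : ℝ) (hc : 0 < c) :
    ∃ a : ℝ, ∀ T : ℝ, a ≤ T → T ^ (-e) * M < c := by
  have h := (tendsto_rpow_neg_atTop he).mul_const M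
  rw [zero_mul] at h
  have h2 : ∀ᶠ T in atTop, T ^ (-e) * M < c := h.eventually_lt_const hc
  obtain ⟨a, ha⟩ := eventually_atTop.mp h2
  exact ⟨a, ha⟩

lemma rpow_mul_ev_gt (e : ℝ) (he : 0 < e) (M c : ℝ) (hM : 0 < M) :
    ∃ a : ℝ, ∀ T : ℝ, a ≤ T → c < T ^ e * M := by
  have h := (tendsto_rpow_atTop he).atTop_mul_const hM
  obtain ⟨a, ha⟩ := eventually_atTop.mp (h.eventually_gt_atTop c)
  exact ⟨a, ha⟩

lemma w2_nonneg (hsub : ∀ T : ℝ, 0 < T → ∀ u ∈ Us T, 0 ≤ u 2)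
    (h : w ∈ limSet (Set.Ioi 0) Us) : 0 ≤ w 2 := by
  by_contra hneg
  push_neg at hneg
  obtain ⟨T, _, hT, u, hu, hd⟩ := extract h (-(w 2)) (by linarith) 0
  have hc := lt_of_le_of_lt (aux_coord w u 2) hd
  have h2 := abs_lt.mp hc
  have h3 := hsub T hT u hu
  linarith [h2.1, h2.2]
end Helpers


set_option maxHeartbeats 1000000 in
/-- Example 2.3, non-conical `U`: with
`U_T = {(w₁,w₂,w₃) ∈ ℝ²×[0,∞) : (D₁₁* + T^{-1/2}w₁) T^{-ρ/2} w₃ - T^{-1} w₂² ≥ 0}`,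
the limit set `U` is `{w₃ ≥ 0}` if `ρ < 2`, `{D₁₁* w₃ ≥ w₂²}` if `ρ = 2`, and
`{w₃ ≥ 0, w₂ = 0}` if `ρ > 2`. -/
theorem limSet_nonconical (D11 : ℝ) (hD11 : 0 < D11) (ρ : ℝ) (hρ : 0 < ρ) :
    (ρ < 2 →
      limSet (Set.Ioi 0) (fun T =>
          {w : EuclideanSpace ℝ (Fin 3) | 0 ≤ w 2 ∧
            0 ≤ (D11 + T ^ (-(1/2 : ℝ)) * w 0) * T ^ (-(ρ/2)) * w 2 - T⁻¹ * (w 1) ^ 2}) =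
        {w : EuclideanSpace ℝ (Fin 3) | 0 ≤ w 2}) ∧
    (ρ = 2 →
      limSet (Set.Ioi 0) (fun T =>
          {w : EuclideanSpace ℝ (Fin 3) | 0 ≤ w 2 ∧
            0 ≤ (D11 + T ^ (-(1/2 : ℝ)) * w 0) * T ^ (-(ρ/2)) * w 2 - T⁻¹ * (w 1) ^ 2}) =
        {w : EuclideanSpace ℝ (Fin 3) | (w 1) ^ 2 ≤ D11 * w 2}) ∧
    (2 < ρ →
      limSet (Set.Ioi 0) (fun T =>
          {w : EuclideanSpace ℝ (Fin 3) | 0 ≤ w 2 ∧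
            0 ≤ (D11 + T ^ (-(1/2 : ℝ)) * w 0) * T ^ (-(ρ/2)) * w 2 - T⁻¹ * (w 1) ^ 2}) =
        {w : EuclideanSpace ℝ (Fin 3) | 0 ≤ w 2 ∧ w 1 = 0}) := by
  refine ⟨?_, ?_, ?_⟩
  · -- case ρ < 2
    intro hρ2
    ext w
    simp only [mem_setOf_eq]
    constructor
    · intro h
      exact w2_nonneg (fun T hT u hu => hu.1) h
    · intro hw2
      apply mem_limSet_of
      intro δ hδ
      obtain ⟨a₁, ha₁⟩ := rpow_mul_ev_lt (1/2) (by norm_num) |w 0| (D11/2) (by positivity)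
      obtain ⟨a₂, ha₂⟩ := rpow_mul_ev_lt (1 - ρ/2) (by linarith) ((w 1)^2) (D11/2*(δ/2))
        (by positivity)
      refine ⟨max a₁ a₂, fun T hT hTa => ?_⟩
      obtain ⟨u, hu0, hu1, hu2, hud⟩ := pert w (δ/2)
      refine ⟨u, ⟨?_, ?_⟩, ?_⟩
      · rw [hu2]; linarith
      · rw [hu0, hu1, hu2]
        have hs : (0:ℝ) ≤ T ^ (-(1/2:ℝ)) := Real.rpow_nonneg hT.le _
        have hq : (0:ℝ) < T ^ (-(ρ/2)) := Real.rpow_pos_of_pos hT _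
        have ha1T := ha₁ T (le_trans (le_max_left _ _) hTa)
        have ha2T := ha₂ T (le_trans (le_max_right _ _) hTa)
        rw [show -(1-ρ/2) = ρ/2 - 1 by ring] at ha2T
        have hid : T⁻¹ = T ^ (-(ρ/2)) * T ^ (ρ/2 - 1) := by
          rw [← Real.rpow_add hT, show -(ρ/2) + (ρ/2-1) = (-1:ℝ) by ring, Real.rpow_neg_one]
        have h1 : T⁻¹ * (w 1)^2 ≤ T ^ (-(ρ/2)) * (D11/2*(δ/2)) := by
          rw [hid, mul_assoc]
          exact mul_le_mul_of_nonneg_left ha2T.le hq.le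
        have h0 : (0:ℝ) ≤ w 0 + |w 0| := by linarith [neg_abs_le (w 0)]
        have h2 : D11/2 ≤ D11 + T ^ (-(1/2:ℝ)) * w 0 := by
          nlinarith [mul_nonneg hs h0]
        have h3 : T ^ (-(ρ/2)) * (D11/2*(δ/2)) ≤
            (D11 + T ^ (-(1/2:ℝ)) * w 0) * T ^ (-(ρ/2)) * (w 2 + δ/2) := by
          have hb : 0 ≤ (D11 + T ^ (-(1/2:ℝ)) * w 0) * T ^ (-(ρ/2)) :=
            mul_nonneg (by linarith) hq.le
          calc T ^ (-(ρ/2)) * (D11/2*(δ/2)) = (D11/2) * T ^ (-(ρ/2)) * (δ/2) := by ring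
          _ ≤ (D11 + T ^ (-(1/2:ℝ)) * w 0) * T ^ (-(ρ/2)) * (w 2 + δ/2) :=
              mul_le_mul (mul_le_mul_of_nonneg_right h2 hq.le) (by linarith) (by linarith) hb
        linarith
      · rw [hud, abs_of_pos (by linarith : (0:ℝ) < δ/2)]; linarith
  · -- case ρ = 2
    intro hρ2
    subst hρ2
    ext w
    simp only [mem_setOf_eq]
    constructor
    · intro h
      have key : ∀ ε > (0:ℝ), (w 1)^2 ≤ D11 * w 2 + ε := by
        intro ε hε
        obtain ⟨δ, hδ, hδ1, hδb⟩ : ∃ δ : ℝ, 0 < δ ∧ δ ≤ 1 ∧ δ * (D11 + 2*|w 1| + 3) ≤ ε/2 := by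
          refine ⟨min 1 (ε/(2*(D11+2*|w 1|+3))), lt_min one_pos (by positivity),
            min_le_left _ _, ?_⟩
          have h1 : min 1 (ε/(2*(D11+2*|w 1|+3))) ≤ ε/(2*(D11+2*|w 1|+3)) := min_le_right _ _
          rw [le_div_iff₀ (by positivity)] at h1
          linarith
        obtain ⟨a, ha⟩ := rpow_mul_ev_lt (1/2) (by norm_num) ((|w 0|+1)*(|w 2|+1)) (ε/2)
          (by positivity)
        obtain ⟨T, hTa, hT, u, hu, hd⟩ := extract h δ hδ a
        simp only [mem_setOf_eq] at hu
        obtain ⟨hu2, hineq⟩ := hu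
        rw [show -((2:ℝ)/2) = (-1:ℝ) by norm_num, Real.rpow_neg_one] at hineq
        set s := T ^ (-(1/2:ℝ)) with hsdef
        have hs : 0 ≤ s := Real.rpow_nonneg hT.le _
        have key1 : (u 1)^2 ≤ (D11 + s * u 0) * u 2 := by
          have h3 : 0 ≤ T * ((D11 + s*u 0)*T⁻¹*u 2 - T⁻¹*(u 1)^2) := mul_nonneg hT.le hineq
          have h4 : T * ((D11 + s*u 0)*T⁻¹*u 2 - T⁻¹*(u 1)^2)
              = (D11 + s*u 0)*u 2 - (u 1)^2 := by
            field_simp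
          linarith
        have hc0 := abs_lt.mp (lt_of_le_of_lt (aux_coord w u 0) hd)
        have hc1 := abs_lt.mp (lt_of_le_of_lt (aux_coord w u 1) hd)
        have hc2 := abs_lt.mp (lt_of_le_of_lt (aux_coord w u 2) hd)
        have hu0b : |u 0| ≤ |w 0| + 1 := by
          have h5 := abs_sub_abs_le_abs_sub (u 0) (w 0)
          rw [abs_sub_comm] at h5
          have h6 := lt_of_le_of_lt (aux_coord w u 0) hd
          linarith
        have hu2b : |u 2| ≤ |w 2| + 1 := by
          have h5 := abs_sub_abs_le_abs_sub (u 2) (w 2)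
          rw [abs_sub_comm] at h5
          have h6 := lt_of_le_of_lt (aux_coord w u 2) hd
          linarith
        have hu1b : |u 1| ≤ |w 1| + 1 := by
          have h5 := abs_sub_abs_le_abs_sub (u 1) (w 1)
          rw [abs_sub_comm] at h5
          have h6 := lt_of_le_of_lt (aux_coord w u 1) hd
          linarith
        have hM : s * (u 0 * u 2) ≤ s * ((|w 0|+1)*(|w 2|+1)) := by
          refine mul_le_mul_of_nonneg_left ?_ hs
          calc u 0 * u 2 ≤ |u 0 * u 2| := le_abs_self _
          _ = |u 0| * |u 2| := abs_mul _ _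
          _ ≤ (|w 0|+1)*(|w 2|+1) := mul_le_mul hu0b hu2b (abs_nonneg _) (by positivity)
        have haT := ha T hTa
        have key2 : (u 1)^2 ≤ D11 * w 2 + D11*δ + ε/2 := by
          nlinarith [key1, hM, haT, hc2.1, hc2.2, hD11]
        have hw1a : |w 1| ≤ |u 1| + δ := by
          have h5 := abs_sub_abs_le_abs_sub (w 1) (u 1)
          have h6 := lt_of_le_of_lt (aux_coord w u 1) hd
          linarith
        have hB : (w 1)^2 ≤ (|u 1| + δ)^2 := by
          have h7 := pow_le_pow_left₀ (abs_nonneg (w 1)) hw1a 2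
          rwa [sq_abs] at h7
        have hsq : |u 1|^2 = (u 1)^2 := sq_abs _
        have hδsq : δ^2 ≤ δ := by nlinarith
        have hmul : δ * |u 1| ≤ δ * (|w 1| + 1) := mul_le_mul_of_nonneg_left hu1b hδ.le
        nlinarith [hB, key2, hδb, hδsq, hmul, hδ, hsq]
      exact le_of_forall_pos_le_add key
    · intro hw
      have hw2 : 0 ≤ w 2 := by nlinarith [sq_nonneg (w 1)]
      apply mem_limSet_of
      intro δ hδ
      obtain ⟨a, ha⟩ := rpow_mul_ev_lt (1/2) (by norm_num) (|w 0| * (w 2 + δ/2)) (D11*(δ/2))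
        (by positivity)
      refine ⟨a, fun T hT hTa => ?_⟩
      obtain ⟨u, hu0, hu1, hu2, hud⟩ := pert w (δ/2)
      refine ⟨u, ⟨?_, ?_⟩, ?_⟩
      · rw [hu2]; linarith
      · rw [hu0, hu1, hu2, show -((2:ℝ)/2) = (-1:ℝ) by norm_num, Real.rpow_neg_one]
        set s := T ^ (-(1/2:ℝ)) with hsdef
        have hs : 0 ≤ s := Real.rpow_nonneg hT.le _
        have haT := ha T hTa
        have h0 : (0:ℝ) ≤ w 0 + |w 0| := by linarith [neg_abs_le (w 0)]
        have hinner : 0 ≤ (D11 + s * w 0) * (w 2 + δ/2) - (w 1)^2 := by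
          nlinarith [mul_nonneg (mul_nonneg hs h0) (by linarith : (0:ℝ) ≤ w 2 + δ/2), haT, hw]
        have heq : (D11 + s * w 0) * T⁻¹ * (w 2 + δ/2) - T⁻¹ * (w 1)^2
            = T⁻¹ * ((D11 + s*w 0)*(w 2+δ/2) - (w 1)^2) := by ring
        rw [heq]
        exact mul_nonneg (inv_nonneg.2 hT.le) hinner
      · rw [hud, abs_of_pos (by linarith : (0:ℝ) < δ/2)]; linarith
  · -- case ρ > 2
    intro hρ2
    ext w
    simp only [mem_setOf_eq]
    constructor
    · intro h
      refine ⟨w2_nonneg (fun T hT u hu => hu.1) h, ?_⟩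
      by_contra h1
      have hw2 : 0 ≤ w 2 := w2_nonneg (fun T hT u hu => hu.1) h
      have hw1 : 0 < |w 1| := abs_pos.2 h1
      have hδ : 0 < |w 1| / 2 := by linarith
      have hw1sq : 0 < (w 1)^2 := lt_of_le_of_ne (sq_nonneg _) (Ne.symm (pow_ne_zero 2 h1))
      obtain ⟨a, ha⟩ := rpow_mul_ev_gt (ρ/2 - 1) (by linarith) ((w 1)^2/4)
        ((D11 + |w 0| + |w 1|/2) * (|w 2| + |w 1|/2)) (by linarith)
      obtain ⟨T, hTa, hT, u, hu, hd⟩ := extract h (|w 1|/2) hδ (max a 1)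
      simp only [mem_setOf_eq] at hu
      obtain ⟨hu2, hineq⟩ := hu
      set s := T ^ (-(1/2:ℝ)) with hsdef
      have hs : 0 ≤ s := Real.rpow_nonneg hT.le _
      have hT1 : (1:ℝ) ≤ T := le_trans (le_max_right a 1) hTa
      have hs1 : s ≤ 1 := Real.rpow_le_one_of_one_le_of_nonpos hT1 (by norm_num)
      have haT := ha T (le_trans (le_max_left a 1) hTa)
      have hp : 0 < T ^ (ρ/2) := Real.rpow_pos_of_pos hT _
      have e1 : T ^ (-(ρ/2)) = (T^(ρ/2))⁻¹ := Real.rpow_neg hT.le _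
      have e2 : T ^ (ρ/2-1) = T^(ρ/2) * T⁻¹ := by
        rw [show ρ/2 - 1 = ρ/2 + (-1) by ring, Real.rpow_add hT, Real.rpow_neg_one]
      have key : T^(ρ/2-1) * (u 1)^2 ≤ (D11 + s * u 0) * u 2 := by
        have h3 : 0 ≤ T^(ρ/2) * ((D11 + s*u 0)*T^(-(ρ/2))*u 2 - T⁻¹*(u 1)^2) :=
          mul_nonneg hp.le hineq
        have h4 : T^(ρ/2) * ((D11 + s*u 0)*T^(-(ρ/2))*u 2 - T⁻¹*(u 1)^2)
            = (D11 + s*u 0)*u 2 - T^(ρ/2-1)*(u 1)^2 := by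
          rw [e1, e2]
          field_simp
        linarith
      have hc0 := abs_lt.mp (lt_of_le_of_lt (aux_coord w u 0) hd)
      have hc2 := abs_lt.mp (lt_of_le_of_lt (aux_coord w u 2) hd)
      have hu0b : u 0 ≤ |w 0| + |w 1|/2 := by linarith [le_abs_self (w 0), hc0.1]
      have hsu0 : s * u 0 ≤ |w 0| + |w 1|/2 := by
        have h5 : s * u 0 ≤ s * (|w 0| + |w 1|/2) := mul_le_mul_of_nonneg_left hu0b hs
        have h6 : s * (|w 0| + |w 1|/2) ≤ 1 * (|w 0| + |w 1|/2) :=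
          mul_le_mul_of_nonneg_right hs1 (by positivity)
        linarith
      have hu2b : u 2 ≤ |w 2| + |w 1|/2 := by linarith [le_abs_self (w 2), hc2.1]
      have hprod : (D11 + s * u 0) * u 2 ≤ (D11 + |w 0| + |w 1|/2) * (|w 2| + |w 1|/2) :=
        mul_le_mul (by linarith) hu2b hu2 (by positivity)
      have hu1sq : (w 1)^2/4 ≤ (u 1)^2 := by
        have h5 : |w 1 - u 1| < |w 1|/2 := lt_of_le_of_lt (aux_coord w u 1) hd
        have h6 := abs_lt.mp h5
        have h7 : (w 1 - u 1)^2 < (|w 1|/2)^2 := sq_lt_sq' h6.1 h6.2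
        rw [div_pow, sq_abs] at h7
        nlinarith [sq_nonneg (w 1 - 2*(w 1 - u 1))]
      have hmono : T^(ρ/2-1) * ((w 1)^2/4) ≤ T^(ρ/2-1) * (u 1)^2 :=
        mul_le_mul_of_nonneg_left hu1sq (Real.rpow_nonneg hT.le _)
      linarith [haT, hmono, key, hprod]
    · rintro ⟨hw2, hw1⟩
      apply mem_limSet_of
      intro δ hδ
      obtain ⟨a, ha⟩ := rpow_mul_ev_lt (1/2) (by norm_num) |w 0| (D11/2) (by positivity)
      refine ⟨a, fun T hT hTa => ?_⟩
      obtain ⟨u, hu0, hu1, hu2, hud⟩ := pert w (δ/2)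
      refine ⟨u, ⟨?_, ?_⟩, ?_⟩
      · rw [hu2]; linarith
      · rw [hu0, hu1, hu2, hw1]
        have hs : (0:ℝ) ≤ T ^ (-(1/2:ℝ)) := Real.rpow_nonneg hT.le _
        have haT := ha T hTa
        have h0 : (0:ℝ) ≤ w 0 + |w 0| := by linarith [neg_abs_le (w 0)]
        have hcoef : 0 ≤ D11 + T ^ (-(1/2:ℝ)) * w 0 := by
          nlinarith [mul_nonneg hs h0]
        have hq : (0:ℝ) ≤ T ^ (-(ρ/2)) := Real.rpow_nonneg hT.le _
        have : (0:ℝ) ≤ (D11 + T ^ (-(1/2:ℝ)) * w 0) * T ^ (-(ρ/2)) * (w 2 + δ/2) :=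
          mul_nonneg (mul_nonneg hcoef hq) (by linarith)
        nlinarith [this]
      · rw [hud, abs_of_pos (by linarith : (0:ℝ) < δ/2)]; linarith
end

section
/- Let $\Theta \subset \mathbb{R}^p$, $\theta^* \in \Theta$, $\mathbb{T} = \mathbb{Z}_{\geq 1}$, $a_T = T^{-1/2} I_p$, $U_T = T^{1/2}(\Theta - \theta^*)$, and $U = \bigcap_{\delta>0}\bigcup_{N\geq1}\bigcap_{T\geq N}(U_T)^\delta$. If $U \supset \bigcap_{N=1}^{\infty}\overline{\bigcup_{T\geq N} U_T}$ (condition [A3]), then $U$ is a cone: for every $u \in U$ and $k > 0$, $ku \in U$, and $0 \in U$. -/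
open Metric Set Filter

/-- The limit set for a family of sets indexed by positive integers:
`U = ⋂_{δ>0} ⋃_{N} ⋂_{n ≥ N, n ≥ 1} (U_n)^δ`. -/
noncomputable def limSetNat {E : Type*} [PseudoEMetricSpace E] (Us : ℕ → Set E) : Set E :=
  ⋂ δ > (0 : ℝ), ⋃ N : ℕ, ⋂ (n : ℕ) (_ : 1 ≤ n) (_ : N ≤ n), Metric.thickening δ (Us n)

lemma mem_limSetNat {E : Type*} [PseudoEMetricSpace E] {Us : ℕ → Set E} {u : E} :
    u ∈ limSetNat Us ↔
      ∀ δ > (0 : ℝ), ∃ N : ℕ, ∀ n : ℕ, 1 ≤ n → N ≤ n → u ∈ Metric.thickening δ (Us n) := by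
  simp [limSetNat, mem_iInter, mem_iUnion]

lemma rpow_neg_half_eq_inv_sqrt (n : ℕ) :
    ((n : ℝ) ^ (-(1/2 : ℝ))) = (Real.sqrt n)⁻¹ := by
  rw [Real.rpow_neg (Nat.cast_nonneg n), Real.sqrt_eq_rpow]

/-- Scaling: if `v ∈ Us n` then `√(m/n) • v ∈ Us m` (for `1 ≤ n`, `1 ≤ m`). -/
lemma scaling {p : ℕ} {Θ : Set (EuclideanSpace ℝ (Fin p))} {θs : EuclideanSpace ℝ (Fin p)}
    {n m : ℕ} (hn : 1 ≤ n) (hm : 1 ≤ m) {v : EuclideanSpace ℝ (Fin p)}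
    (hv : θs + ((n : ℝ) ^ (-(1/2 : ℝ))) • v ∈ Θ) :
    θs + ((m : ℝ) ^ (-(1/2 : ℝ))) • ((Real.sqrt ((m : ℝ) / n)) • v) ∈ Θ := by
  have hn0 : (0 : ℝ) < n := by exact_mod_cast hn
  have hm0 : (0 : ℝ) < m := by exact_mod_cast hm
  have hsn : Real.sqrt n ≠ 0 := ne_of_gt (Real.sqrt_pos.mpr hn0)
  have hsm : Real.sqrt m ≠ 0 := ne_of_gt (Real.sqrt_pos.mpr hm0)
  rw [smul_smul, rpow_neg_half_eq_inv_sqrt, Real.sqrt_div (le_of_lt hm0)]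
  have : (Real.sqrt m)⁻¹ * (Real.sqrt m / Real.sqrt n) = (Real.sqrt n)⁻¹ := by
    field_simp
  rw [this, ← rpow_neg_half_eq_inv_sqrt]
  exact hv

set_option maxHeartbeats 1000000 in
/-- with `U_T = T^{1/2}(Θ - θ*)` (i.e. `U_T = {u : θ* + T^{-1/2} u ∈ Θ}`),
if condition [A3] holds then the limit set `U` is a cone: `0 ∈ U` and `k u ∈ U` for every
`u ∈ U` and `k > 0`. -/
theorem limSet_isCone_of_A3 (p : ℕ) (Θ : Set (EuclideanSpace ℝ (Fin p)))
    (θs : EuclideanSpace ℝ (Fin p)) (hθs : θs ∈ Θ)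
    (hA3 : (⋂ N : ℕ, closure (⋃ (n : ℕ) (_ : 1 ≤ n) (_ : N ≤ n),
        {u : EuclideanSpace ℝ (Fin p) | θs + ((n : ℝ) ^ (-(1/2 : ℝ))) • u ∈ Θ})) ⊆
      limSetNat (fun n => {u : EuclideanSpace ℝ (Fin p) | θs + ((n : ℝ) ^ (-(1/2 : ℝ))) • u ∈ Θ})) :
    (0 : EuclideanSpace ℝ (Fin p)) ∈
        limSetNat (fun n => {u : EuclideanSpace ℝ (Fin p) | θs + ((n : ℝ) ^ (-(1/2 : ℝ))) • u ∈ Θ}) ∧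
      ∀ u ∈ limSetNat
          (fun n => {u : EuclideanSpace ℝ (Fin p) | θs + ((n : ℝ) ^ (-(1/2 : ℝ))) • u ∈ Θ}),
        ∀ k : ℝ, 0 < k →
          k • u ∈ limSetNat
            (fun n => {u : EuclideanSpace ℝ (Fin p) | θs + ((n : ℝ) ^ (-(1/2 : ℝ))) • u ∈ Θ}) := by
  constructor
  · rw [mem_limSetNat]
    intro δ hδ
    refine ⟨0, fun n _ _ => ?_⟩
    apply Metric.self_subset_thickening hδ
    show θs + ((n : ℝ) ^ (-(1/2 : ℝ))) • (0 : EuclideanSpace ℝ (Fin p)) ∈ Θ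
    simpa using hθs
  · intro u hu k hk
    apply hA3
    rw [mem_iInter]
    intro N
    rw [Metric.mem_closure_iff]
    intro ε hε
    have hδ : (0 : ℝ) < ε / (4 * k) := by positivity
    obtain ⟨N₀, hN₀⟩ := mem_limSetNat.mp hu (ε / (4 * k)) hδ
    obtain ⟨n₁, hn₁⟩ := exists_nat_gt (((N : ℝ) + 1) / k ^ 2)
    obtain ⟨n₂, hn₂⟩ := exists_nat_gt ((‖u‖ + ε / (4 * k)) / (k * ε))
    set n : ℕ := max (max N₀ 1) (max n₁ n₂) with hn_def
    have hn1 : 1 ≤ n := le_trans (le_max_right N₀ 1) (le_max_left _ _)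
    have hnN₀ : N₀ ≤ n := le_trans (le_max_left N₀ 1) (le_max_left _ _)
    have hnn₁ : n₁ ≤ n := le_trans (le_max_left n₁ n₂) (le_max_right _ _)
    have hnn₂ : n₂ ≤ n := le_trans (le_max_right n₁ n₂) (le_max_right _ _)
    have hn0 : (0 : ℝ) < n := by exact_mod_cast hn1
    clear_value n
    obtain ⟨v, hv, hdv⟩ := Metric.mem_thickening_iff.mp (hN₀ n hn1 hnN₀)
    set m : ℕ := ⌈k ^ 2 * (n : ℝ)⌉₊ with hm_def
    have hmk : k ^ 2 * (n : ℝ) ≤ m := Nat.le_ceil _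
    have hkn₁ : (N : ℝ) + 1 < k ^ 2 * (n₁ : ℝ) := by
      rw [div_lt_iff₀ (by positivity)] at hn₁
      linarith [hn₁]
    have hkn : (N : ℝ) + 1 < k ^ 2 * (n : ℝ) := by
      have : (n₁ : ℝ) ≤ n := by exact_mod_cast hnn₁
      nlinarith
    have hmN1 : (N : ℝ) + 1 < (m : ℝ) := lt_of_lt_of_le hkn hmk
    have hm1 : 1 ≤ m := by
      have : (1 : ℝ) < (m : ℝ) := by
        have : (0 : ℝ) ≤ N := Nat.cast_nonneg N
        linarith
      exact_mod_cast this.le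
    have hmN : N ≤ m := by
      have : (N : ℝ) < (m : ℝ) := by linarith
      exact_mod_cast this.le
    have hm_ub : (m : ℝ) < k ^ 2 * (n : ℝ) + 1 := Nat.ceil_lt_add_one (by positivity)
    clear_value m
    set c : ℝ := Real.sqrt ((m : ℝ) / n) with hc_def
    have hc0 : 0 ≤ c := Real.sqrt_nonneg _
    have hcsq : c ^ 2 = (m : ℝ) / n := Real.sq_sqrt (by positivity)
    have hck : k ≤ c := by
      rw [hc_def, Real.le_sqrt hk.le (by positivity)]
      rw [le_div_iff₀ hn0]
      exact hmk
    have hcsq_ub : c ^ 2 ≤ k ^ 2 + 1 / n := by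
      rw [hcsq, div_le_iff₀ hn0]
      have : k ^ 2 * n + (1 / (n:ℝ)) * n = k ^ 2 * n + 1 := by field_simp
      nlinarith
    clear_value c
    have hck_ub : c - k ≤ 1 / (2 * k * n) := by
      have h2k : 0 < c + k := by linarith
      have key : (c - k) * (c + k) ≤ 1 / n := by nlinarith
      have key' : (c - k) * (c + k) * n ≤ 1 := by
        have h := mul_le_mul_of_nonneg_right key hn0.le
        rwa [one_div, inv_mul_cancel₀ (ne_of_gt hn0)] at h
      rw [le_div_iff₀ (by positivity)]
      nlinarith [mul_nonneg (sq_nonneg (c - k)) hn0.le]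
    refine ⟨c • v, ?_, ?_⟩
    · rw [mem_iUnion]
      refine ⟨m, ?_⟩
      simp only [mem_iUnion]
      exact ⟨hm1, hmN, hc_def ▸ scaling hn1 hm1 hv⟩
    · have hdv' : ‖u - v‖ < ε / (4 * k) := by
        rw [← dist_eq_norm]; exact hdv
      have hvnorm : ‖v‖ ≤ ‖u‖ + ε / (4 * k) := by
        have h := norm_le_insert' v u
        rw [norm_sub_rev] at h
        linarith
      have hsplit : dist (k • u) (c • v) ≤ k * ‖u - v‖ + (c - k) * ‖v‖ := by
        rw [dist_eq_norm]
        have : k • u - c • v = k • (u - v) + (k - c) • v := by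
          rw [smul_sub, sub_smul]; abel
        rw [this]
        calc ‖k • (u - v) + (k - c) • v‖ ≤ ‖k • (u - v)‖ + ‖(k - c) • v‖ :=
              norm_add_le _ _
          _ = |k| * ‖u - v‖ + |k - c| * ‖v‖ := by rw [norm_smul, norm_smul]; simp [Real.norm_eq_abs]
          _ = k * ‖u - v‖ + (c - k) * ‖v‖ := by
              rw [abs_of_pos hk, abs_of_nonpos (by linarith), neg_sub]
      have hterm1 : k * ‖u - v‖ < ε / 4 := by
        have := mul_lt_mul_of_pos_left hdv' hk
        calc k * ‖u - v‖ < k * (ε / (4 * k)) := this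
          _ = ε / 4 := by field_simp
      have hterm2 : (c - k) * ‖v‖ < 3 * ε / 4 := by
        have hn₂' : (‖u‖ + ε / (4 * k)) / (k * ε) < n := by
          have : (n₂ : ℝ) ≤ n := by exact_mod_cast hnn₂
          linarith
        have hub : (‖u‖ + ε / (4 * k)) < (n : ℝ) * (k * ε) :=
          (div_lt_iff₀ (by positivity)).mp hn₂'
        have hnv0 : 0 ≤ ‖v‖ := norm_nonneg _
        have h1 : (c - k) * ‖v‖ ≤ (1 / (2 * k * n)) * (‖u‖ + ε / (4 * k)) := by
          apply mul_le_mul hck_ub (by linarith) hnv0 (by positivity)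
        have h2 : (1 / (2 * k * (n:ℝ))) * (‖u‖ + ε / (4 * k)) < ε / 2 := by
          rw [div_mul_eq_mul_div, one_mul, div_lt_iff₀ (by positivity)]
          have he : ε / 2 * (2 * k * (n:ℝ)) = (n : ℝ) * (k * ε) := by ring
          rw [he]
          exact hub
        linarith
      calc dist (k • u) (c • v) ≤ k * ‖u - v‖ + (c - k) * ‖v‖ := hsplit
        _ < ε / 4 + 3 * ε / 4 := by linarith
        _ = ε := by ring
end

section
/- Let $\Theta \subset \mathbb{R}^p$, $\theta^* \in \Theta$, $\mathbb{T} = \mathbb{Z}_{\geq 1}$, $U_T = T^{1/2}(\Theta - \theta^*)$, and $U = \bigcap_{\delta>0}\bigcup_{N\geq1}\bigcap_{T\geq N}(U_T)^\delta$. Then $U \supset \bigcap_{N=1}^{\infty}\overline{\bigcup_{T\geq N} U_T}$ holds if and only if $\Theta - \theta^*$ is locally approximated at the origin by some cone $\Lambda$, and in that case $U = \overline{\Lambda}$. -/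
open Metric Set Filter Asymptotics

/-- `Λ` is a cone (with vertex at the origin). -/
def IsCone {E : Type*} [AddCommMonoid E] [Module ℝ E] (Λ : Set E) : Prop :=
  Λ.Nonempty ∧ ∀ lam ∈ Λ, ∀ t : ℝ, 0 ≤ t → t • lam ∈ Λ

/-- `Θ - θ*` is locally approximated at the origin by `Λ` (Chernoff/Andrews). -/
def LocallyApprox {p : ℕ} (Θ : Set (EuclideanSpace ℝ (Fin p)))
    (θs : EuclideanSpace ℝ (Fin p)) (Λ : Set (EuclideanSpace ℝ (Fin p))) : Prop :=
  (∀ φ : ℕ → EuclideanSpace ℝ (Fin p), (∀ n, θs + φ n ∈ Θ) →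
    Tendsto (fun n => ‖φ n‖) atTop (nhds 0) →
    (fun n => Metric.infDist (φ n) Λ) =o[atTop] fun n => ‖φ n‖) ∧
  (∀ lam : ℕ → EuclideanSpace ℝ (Fin p), (∀ n, lam n ∈ Λ) →
    Tendsto (fun n => ‖lam n‖) atTop (nhds 0) →
    (fun n => Metric.infDist (lam n) {x | θs + x ∈ Θ}) =o[atTop] fun n => ‖lam n‖)

variable {E : Type*} [NormedAddCommGroup E] [NormedSpace ℝ E]

noncomputable def UnF (Φ : Set E) (n : ℕ) : Set E := {u | ((n:ℝ) ^ (-(1/2:ℝ))) • u ∈ Φ}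

noncomputable def LF (Φ : Set E) : Set E :=
  ⋂ N : ℕ, closure (⋃ (n : ℕ) (_ : 1 ≤ n) (_ : N ≤ n), UnF Φ n)

lemma sca_eq (n : ℕ) : ((n:ℝ)) ^ (-(1/2:ℝ)) = (Real.sqrt n)⁻¹ := by
  rw [Real.rpow_neg (Nat.cast_nonneg n), ← Real.sqrt_eq_rpow]

lemma sqrt_pos' {n : ℕ} (hn : 1 ≤ n) : 0 < Real.sqrt n := by
  have : (1:ℝ) ≤ n := by exact_mod_cast hn
  positivity

variable {Φ : Set E}

lemma mem_UnF {n : ℕ} {u : E} : u ∈ UnF Φ n ↔ (Real.sqrt n)⁻¹ • u ∈ Φ := by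
  rw [UnF, mem_setOf_eq, sca_eq]

lemma smul_mem_UnF {n : ℕ} (hn : 1 ≤ n) {x : E} (hx : x ∈ Φ) :
    Real.sqrt n • x ∈ UnF Φ n := by
  rw [mem_UnF, inv_smul_smul₀ (sqrt_pos' hn).ne']
  exact hx

lemma zero_mem_UnF (h0 : (0:E) ∈ Φ) (n : ℕ) : (0:E) ∈ UnF Φ n := by
  rw [UnF, mem_setOf_eq, smul_zero]; exact h0

lemma limSet_subset_LF : limSetNat (UnF Φ) ⊆ LF Φ := by
  intro u hu
  rw [limSetNat] at hu
  simp only [mem_iInter, mem_iUnion] at hu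
  rw [LF, mem_iInter]
  intro N
  rw [Metric.mem_closure_iff]
  intro ε hε
  obtain ⟨N', hN'⟩ := hu ε hε
  have h := hN' (max 1 (max N N')) (le_max_left _ _)
    (le_trans (le_max_right _ _) (le_max_right _ _))
  rw [mem_thickening_iff] at h
  obtain ⟨v, hv, hd⟩ := h
  exact ⟨v, by
    simp only [mem_iUnion]
    exact ⟨_, le_max_left _ _, le_trans (le_max_left _ _) (le_max_right _ _), hv⟩, hd⟩

lemma cone_infDist_smul {Λ : Set E} (hΛ : IsCone Λ) (x : E) {t : ℝ} (ht : 0 ≤ t) :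
    infDist (t • x) Λ ≤ t * infDist x Λ := by
  rcases ht.eq_or_lt with rfl | htpos
  · have h0 : (0:E) ∈ Λ := by
      obtain ⟨⟨y, hy⟩, hc⟩ := hΛ
      simpa using hc y hy 0 le_rfl
    simp [zero_smul, infDist_zero_of_mem h0]
  · apply le_of_forall_pos_le_add
    intro ε hε
    have hne : Λ.Nonempty := hΛ.1
    have : infDist x Λ < infDist x Λ + ε / t := lt_add_of_pos_right _ (by positivity)
    obtain ⟨y, hy, hd⟩ := (infDist_lt_iff hne).1 this
    have hty : t • y ∈ Λ := hΛ.2 y hy t ht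
    calc infDist (t • x) Λ ≤ dist (t • x) (t • y) := infDist_le_dist_of_mem hty
      _ = t * dist x y := by
          rw [dist_smul₀, Real.norm_of_nonneg ht]
      _ ≤ t * (infDist x Λ + ε / t) := by nlinarith [dist_nonneg (x := x) (y := y)]
      _ = t * infDist x Λ + ε := by field_simp

lemma sqrt_nat_tendsto : Tendsto (fun n : ℕ => Real.sqrt n) atTop atTop := by
  refine tendsto_atTop.2 fun b => ?_
  filter_upwards [eventually_ge_atTop (⌈b^2⌉₊)] with n hn
  calc b ≤ |b| := le_abs_self b
    _ = Real.sqrt (b^2) := (Real.sqrt_sq_eq_abs b).symm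
    _ ≤ Real.sqrt n := Real.sqrt_le_sqrt (le_trans (Nat.le_ceil _) (by exact_mod_cast hn))

lemma inv_sqrt_tendsto : Tendsto (fun n : ℕ => (Real.sqrt n)⁻¹) atTop (nhds 0) :=
  sqrt_nat_tendsto.inv_tendsto_atTop

lemma closure_subset_limSet {Λ : Set E} (hΛ : IsCone Λ) (h0 : (0:E) ∈ Φ)
    (hb : ∀ lam : ℕ → E, (∀ n, lam n ∈ Λ) →
      Tendsto (fun n => ‖lam n‖) atTop (nhds 0) →
      (fun n => infDist (lam n) Φ) =o[atTop] fun n => ‖lam n‖) :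
    closure Λ ⊆ limSetNat (UnF Φ) := by
  intro u hu
  rw [limSetNat]
  simp only [mem_iInter, mem_iUnion]
  intro δ hδ
  obtain ⟨lam, hlam, hdul⟩ := Metric.mem_closure_iff.1 hu (δ/4) (by positivity)
  rcases eq_or_ne lam 0 with rfl | hne
  · refine ⟨0, fun n _ _ => ?_⟩
    rw [mem_thickening_iff]
    exact ⟨0, zero_mem_UnF h0 n, by linarith⟩
  · have hlampos : (0:ℝ) < ‖lam‖ := norm_pos_iff.2 hne
    set g : ℕ → E := fun n => (Real.sqrt n)⁻¹ • lam with hg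
    have hgmem : ∀ n, g n ∈ Λ := fun n =>
      hΛ.2 lam hlam _ (inv_nonneg.2 (Real.sqrt_nonneg _))
    have hgnorm : ∀ n, ‖g n‖ = (Real.sqrt n)⁻¹ * ‖lam‖ := fun n => by
      rw [hg, norm_smul, Real.norm_of_nonneg (inv_nonneg.2 (Real.sqrt_nonneg _))]
    have hgt : Tendsto (fun n => ‖g n‖) atTop (nhds 0) := by
      simp only [hgnorm]
      simpa using inv_sqrt_tendsto.mul_const ‖lam‖
    have ho := hb g hgmem hgt
    have hc : (0:ℝ) < δ/(4*‖lam‖) := by positivity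
    have hev := (Asymptotics.isLittleO_iff.1 ho) hc
    rw [eventually_atTop] at hev
    obtain ⟨N, hN⟩ := hev
    refine ⟨N + 1, fun n hn1 hnN => ?_⟩
    have hsp := sqrt_pos' hn1
    have h1 := hN n (le_trans (Nat.le_succ N) hnN)
    rw [Real.norm_of_nonneg infDist_nonneg, Real.norm_of_nonneg (norm_nonneg _),
      hgnorm] at h1
    have h2 : infDist (g n) Φ < δ/2 * (Real.sqrt n)⁻¹ := by
      have : δ/(4*‖lam‖) * ((Real.sqrt n)⁻¹ * ‖lam‖) = δ/4 * (Real.sqrt n)⁻¹ := by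
        field_simp
      rw [this] at h1
      have : δ/4 * (Real.sqrt n)⁻¹ < δ/2 * (Real.sqrt n)⁻¹ := by
        apply mul_lt_mul_of_pos_right (by linarith) (by positivity)
      linarith
    obtain ⟨x, hxΦ, hdx⟩ := (infDist_lt_iff ⟨0, h0⟩).1 h2
    rw [mem_thickening_iff]
    refine ⟨Real.sqrt n • x, smul_mem_UnF hn1 hxΦ, ?_⟩
    have hlameq : lam = Real.sqrt n • g n := by
      rw [hg]; rw [smul_inv_smul₀ hsp.ne']
    have hdistlam : dist lam (Real.sqrt n • x) < δ/2 := by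
      rw [hlameq, dist_smul₀, Real.norm_of_nonneg (Real.sqrt_nonneg _)]
      calc Real.sqrt n * dist (g n) x < Real.sqrt n * (δ/2 * (Real.sqrt n)⁻¹) :=
            mul_lt_mul_of_pos_left hdx hsp
        _ = δ/2 := by field_simp
    calc dist u (Real.sqrt n • x) ≤ dist u lam + dist lam (Real.sqrt n • x) :=
          dist_triangle _ _ _
      _ < δ := by linarith

lemma LF_subset_closure {Λ : Set E} (hΛ : IsCone Λ)
    (ha : ∀ φ : ℕ → E, (∀ n, φ n ∈ Φ) →
      Tendsto (fun n => ‖φ n‖) atTop (nhds 0) →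
      (fun n => infDist (φ n) Λ) =o[atTop] fun n => ‖φ n‖) :
    LF Φ ⊆ closure Λ := by
  intro u hu
  rw [mem_closure_iff_infDist_zero hΛ.1]
  refine le_antisymm ?_ infDist_nonneg
  have H : ∀ k : ℕ, ∃ n, 1 ≤ n ∧ k ≤ n ∧ ∃ v ∈ UnF Φ n, dist u v < 1/(k+1) := by
    intro k
    have := (mem_iInter.1 hu) k
    obtain ⟨v, hv, hd⟩ := Metric.mem_closure_iff.1 this (1/(k+1)) (by positivity)
    simp only [mem_iUnion] at hv
    obtain ⟨n, hn1, hnk, hvn⟩ := hv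
    exact ⟨n, hn1, hnk, v, hvn, hd⟩
  choose nk h1 h2 v hv hd using H
  set φ : ℕ → E := fun k => (Real.sqrt (nk k))⁻¹ • v k with hφ
  have hφmem : ∀ k, φ k ∈ Φ := fun k => mem_UnF.1 (hv k)
  have hvnorm : ∀ k, ‖v k‖ ≤ ‖u‖ + 1 := by
    intro k
    have : dist u (v k) ≤ 1 := le_of_lt (lt_of_lt_of_le (hd k) (by
      rw [div_le_one (by positivity)]; linarith [Nat.cast_nonneg (α := ℝ) k]))
    calc ‖v k‖ ≤ ‖u‖ + dist u (v k) := by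
          rw [dist_eq_norm]
          have := norm_sub_norm_le u (v k)
          linarith [abs_le.1 (abs_norm_sub_norm_le u (v k))]
      _ ≤ ‖u‖ + 1 := by linarith
  have hφnorm : ∀ k, ‖φ k‖ = (Real.sqrt (nk k))⁻¹ * ‖v k‖ := fun k => by
    rw [hφ, norm_smul, Real.norm_of_nonneg (inv_nonneg.2 (Real.sqrt_nonneg _))]
  have hφt : Tendsto (fun k => ‖φ k‖) atTop (nhds 0) := by
    have hup : Tendsto (fun k : ℕ => (Real.sqrt k)⁻¹ * (‖u‖+1)) atTop (nhds 0) := by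
      simpa using inv_sqrt_tendsto.mul_const (‖u‖+1)
    refine tendsto_of_tendsto_of_tendsto_of_le_of_le' tendsto_const_nhds hup
      (Eventually.of_forall fun k => norm_nonneg _) ?_
    filter_upwards [eventually_ge_atTop 1] with k hk
    rw [hφnorm]
    have hmono : (Real.sqrt (nk k))⁻¹ ≤ (Real.sqrt k)⁻¹ :=
      inv_anti₀ (sqrt_pos' hk) (Real.sqrt_le_sqrt (by exact_mod_cast h2 k))
    calc (Real.sqrt (nk k))⁻¹ * ‖v k‖ ≤ (Real.sqrt (nk k))⁻¹ * (‖u‖+1) := by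
          apply mul_le_mul_of_nonneg_left (hvnorm k) (inv_nonneg.2 (Real.sqrt_nonneg _))
      _ ≤ (Real.sqrt k)⁻¹ * (‖u‖+1) := by
          apply mul_le_mul_of_nonneg_right hmono (by positivity)
  have ho := ha φ hφmem hφt
  apply le_of_forall_pos_le_add
  intro ε hε
  have hc : (0:ℝ) < ε/(2*(‖u‖+1)) := by positivity
  have hev := (Asymptotics.isLittleO_iff.1 ho) hc
  rw [eventually_atTop] at hev
  obtain ⟨N, hN⟩ := hev
  obtain ⟨k, hkN, hk2⟩ : ∃ k, N ≤ k ∧ 1/((k:ℝ)+1) < ε/2 := by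
    obtain ⟨k, hk⟩ := exists_nat_gt (2/ε)
    refine ⟨max N k, le_max_left _ _, ?_⟩
    rw [div_lt_iff₀ (by positivity)]
    have : (2:ℝ)/ε < (max N k : ℕ) + 1 := by
      have : (k:ℝ) ≤ (max N k : ℕ) := by exact_mod_cast le_max_right N k
      linarith
    calc (1:ℝ) = ε/2 * (2/ε) := by field_simp
      _ < ε/2 * ((max N k : ℕ) + 1) := by
          apply mul_lt_mul_of_pos_left this (by positivity)
  have h1b := hN k hkN
  rw [Real.norm_of_nonneg infDist_nonneg, Real.norm_of_nonneg (norm_nonneg _)] at h1b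
  have hveq : v k = Real.sqrt (nk k) • φ k := by
    rw [hφ, smul_inv_smul₀ (sqrt_pos' (h1 k)).ne']
  have hiv : infDist (v k) Λ ≤ ε/2 := by
    calc infDist (v k) Λ = infDist (Real.sqrt (nk k) • φ k) Λ := by rw [← hveq]
      _ ≤ Real.sqrt (nk k) * infDist (φ k) Λ :=
          cone_infDist_smul hΛ _ (Real.sqrt_nonneg _)
      _ ≤ Real.sqrt (nk k) * (ε/(2*(‖u‖+1)) * ‖φ k‖) := by
          apply mul_le_mul_of_nonneg_left h1b (Real.sqrt_nonneg _)
      _ = ε/(2*(‖u‖+1)) * (Real.sqrt (nk k) * ((Real.sqrt (nk k))⁻¹ * ‖v k‖)) := by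
          rw [hφnorm]; ring
      _ = ε/(2*(‖u‖+1)) * ‖v k‖ := by
          rw [mul_inv_cancel_left₀ (sqrt_pos' (h1 k)).ne']
      _ ≤ ε/(2*(‖u‖+1)) * (‖u‖+1) := by
          apply mul_le_mul_of_nonneg_left (hvnorm k) (le_of_lt hc)
      _ = ε/2 := by field_simp
  calc infDist u Λ ≤ infDist (v k) Λ + dist u (v k) := infDist_le_infDist_add_dist
    _ ≤ ε/2 + 1/((k:ℝ)+1) := by
        have := hd k
        push_cast at this ⊢
        gcongr
    _ ≤ 0 + ε := by linarith

lemma norm_le_add_dist (u w : E) : ‖w‖ ≤ ‖u‖ + dist u w := by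
  rw [dist_eq_norm]
  linarith [abs_le.1 (abs_norm_sub_norm_le u w)]

lemma zero_mem_LF (h0 : (0:E) ∈ Φ) : (0:E) ∈ LF Φ := by
  rw [LF, mem_iInter]
  intro N
  apply subset_closure
  simp only [mem_iUnion]
  exact ⟨N+1, Nat.le_add_left 1 N, Nat.le_succ N, zero_mem_UnF h0 _⟩

lemma LF_isCone (h0 : (0:E) ∈ Φ) : IsCone (LF Φ) := by
  refine ⟨⟨0, zero_mem_LF h0⟩, fun u hu t ht => ?_⟩
  rcases ht.eq_or_lt with rfl | htpos
  · rw [zero_smul]; exact zero_mem_LF h0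
  rw [LF, mem_iInter]
  intro N
  rw [Metric.mem_closure_iff]
  intro ε hε
  set ε₁ : ℝ := min 1 (ε/(2*(t+1))) with hε₁def
  have hε₁pos : 0 < ε₁ := lt_min one_pos (by positivity)
  set M : ℕ := max (⌈((N:ℝ)+1)/t^2⌉₊) (⌈(2*(‖u‖+1)/ε)^2⌉₊) with hMdef
  obtain ⟨w, hwU, hdw⟩ := Metric.mem_closure_iff.1 ((mem_iInter.1 hu) M) ε₁ hε₁pos
  simp only [mem_iUnion] at hwU
  obtain ⟨m, hm1, hmM, hwm⟩ := hwU
  have hmMR : ((M:ℝ)) ≤ m := by exact_mod_cast hmM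
  have hsm := sqrt_pos' hm1
  set n : ℕ := ⌈t^2 * m⌉₊ with hndef
  have hnlb : t^2 * (m:ℝ) ≤ n := Nat.le_ceil _
  have hnub : (n:ℝ) < t^2 * m + 1 := Nat.ceil_lt_add_one (by positivity)
  -- n ≥ N+1
  have hMlb1 : ((N:ℝ)+1)/t^2 ≤ M := le_trans (Nat.le_ceil _)
    (Nat.cast_le.2 (le_max_left _ _))
  have hnN : (N:ℝ) + 1 ≤ n := by
    have : ((N:ℝ)+1) ≤ t^2 * M := by
      rw [div_le_iff₀ (by positivity)] at hMlb1
      linarith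
    nlinarith
  have hn1 : 1 ≤ n := by
    have : ((1:ℕ):ℝ) ≤ n := by push_cast; linarith [Nat.cast_nonneg (α := ℝ) N]
    exact_mod_cast this
  have hnNnat : N ≤ n := by
    have : ((N:ℕ):ℝ) ≤ n := by linarith
    exact_mod_cast this
  have hsn := sqrt_pos' hn1
  -- sqrt M lower bound
  have hMlb2 : (2*(‖u‖+1)/ε)^2 ≤ (M:ℝ) := le_trans (Nat.le_ceil _)
    (by exact_mod_cast le_max_right _ _)
  have hsqM : 2*(‖u‖+1)/ε ≤ Real.sqrt m := by
    calc 2*(‖u‖+1)/ε = Real.sqrt ((2*(‖u‖+1)/ε)^2) := by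
          rw [Real.sqrt_sq (by positivity)]
      _ ≤ Real.sqrt m := Real.sqrt_le_sqrt (le_trans hMlb2 hmMR)
  have hinvm : (Real.sqrt m)⁻¹ ≤ ε/(2*(‖u‖+1)) := by
    rw [inv_le_comm₀ hsm (show (0:ℝ) < ε/(2*(‖u‖+1)) by positivity), inv_div]
    exact hsqM
  -- sqrt n bounds
  have hsq1 : t * Real.sqrt m ≤ Real.sqrt n := by
    calc t * Real.sqrt m = Real.sqrt (t^2 * m) := by
          rw [Real.sqrt_mul (sq_nonneg t), Real.sqrt_sq ht]
      _ ≤ Real.sqrt n := Real.sqrt_le_sqrt hnlb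
  have hsq2 : Real.sqrt n ≤ t * Real.sqrt m + 1 := by
    have hsqm2 : Real.sqrt m ^ 2 = (m:ℝ) := Real.sq_sqrt (Nat.cast_nonneg m)
    calc Real.sqrt n ≤ Real.sqrt ((t * Real.sqrt m + 1)^2) := by
          apply Real.sqrt_le_sqrt
          nlinarith [Real.sqrt_nonneg (m:ℝ)]
      _ = t * Real.sqrt m + 1 := Real.sqrt_sq (by positivity)
  -- the witness
  refine ⟨(Real.sqrt n * (Real.sqrt m)⁻¹) • w, ?_, ?_⟩
  · simp only [mem_iUnion]
    refine ⟨n, hn1, hnNnat, ?_⟩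
    rw [mem_UnF, smul_smul, ← mul_assoc, inv_mul_cancel₀ hsn.ne', one_mul]
    exact mem_UnF.1 hwm
  · have hwnorm : ‖w‖ ≤ ‖u‖ + 1 :=
      le_trans (norm_le_add_dist u w) (by
        have : ε₁ ≤ 1 := min_le_left _ _
        linarith)
    have hinv0 : (0:ℝ) ≤ (Real.sqrt m)⁻¹ := inv_nonneg.2 hsm.le
    have hc1 : Real.sqrt m * (Real.sqrt m)⁻¹ = 1 := mul_inv_cancel₀ hsm.ne'
    have hA : t ≤ Real.sqrt n * (Real.sqrt m)⁻¹ := by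
      have h := mul_le_mul_of_nonneg_right hsq1 hinv0
      rwa [mul_assoc, hc1, mul_one] at h
    have hB : Real.sqrt n * (Real.sqrt m)⁻¹ ≤ t + (Real.sqrt m)⁻¹ := by
      have h := mul_le_mul_of_nonneg_right hsq2 hinv0
      rwa [add_mul, one_mul, mul_assoc, hc1, mul_one] at h
    have hratio : |t - Real.sqrt n * (Real.sqrt m)⁻¹| ≤ (Real.sqrt m)⁻¹ := by
      rw [abs_le]
      exact ⟨by linarith, by linarith⟩
    calc dist (t • u) ((Real.sqrt n * (Real.sqrt m)⁻¹) • w)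
        ≤ dist (t • u) (t • w) + dist (t • w) ((Real.sqrt n * (Real.sqrt m)⁻¹) • w) :=
          dist_triangle _ _ _
      _ = t * dist u w + |t - Real.sqrt n * (Real.sqrt m)⁻¹| * ‖w‖ := by
          rw [dist_smul₀, Real.norm_of_nonneg ht]
          congr 1
          rw [dist_eq_norm, ← sub_smul, norm_smul, Real.norm_eq_abs]
      _ < ε := by
          have h1 : t * dist u w < ε/2 := by
            have hd1 : t * dist u w < t * ε₁ := mul_lt_mul_of_pos_left hdw htpos
            have : t * ε₁ ≤ t * (ε/(2*(t+1))) :=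
              mul_le_mul_of_nonneg_left (min_le_right _ _) ht
            have : t * (ε/(2*(t+1))) < ε/2 := by
              rw [← mul_div_assoc, div_lt_div_iff₀ (by positivity) (by norm_num : (0:ℝ) < 2)]
              nlinarith
            linarith
          have h2 : |t - Real.sqrt n * (Real.sqrt m)⁻¹| * ‖w‖ ≤ ε/2 := by
            calc |t - Real.sqrt n * (Real.sqrt m)⁻¹| * ‖w‖
                ≤ (Real.sqrt m)⁻¹ * (‖u‖+1) := by
                  apply mul_le_mul hratio hwnorm (norm_nonneg _) (inv_nonneg.2 hsm.le)
              _ ≤ ε/(2*(‖u‖+1)) * (‖u‖+1) := by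
                  apply mul_le_mul_of_nonneg_right hinvm (by positivity)
              _ = ε/2 := by field_simp
          linarith

lemma ceil_sqrt_facts {r : ℝ} (hr : 0 < r) :
    1 ≤ ⌈(r^2)⁻¹⌉₊ ∧ (Real.sqrt ⌈(r^2)⁻¹⌉₊)⁻¹ ≤ r ∧
      r - (Real.sqrt ⌈(r^2)⁻¹⌉₊)⁻¹ ≤ r * r ∧
      (r ≤ 1 → Real.sqrt ⌈(r^2)⁻¹⌉₊ * r ≤ 2) := by
  set n : ℕ := ⌈(r^2)⁻¹⌉₊ with hndef
  have hn1 : 1 ≤ n := Nat.one_le_iff_ne_zero.2 (by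
    have : 0 < n := Nat.ceil_pos.2 (by positivity)
    omega)
  have hlb : ((r^2)⁻¹ : ℝ) ≤ n := Nat.le_ceil _
  have hub : (n:ℝ) < (r^2)⁻¹ + 1 := Nat.ceil_lt_add_one (by positivity)
  have hs := sqrt_pos' hn1
  set s : ℝ := Real.sqrt n with hsdef
  have h2 : s⁻¹ ≤ r := by
    have hrs : r⁻¹ ≤ s := by
      calc r⁻¹ = Real.sqrt ((r^2)⁻¹) := by
            rw [Real.sqrt_inv, Real.sqrt_sq hr.le]
        _ ≤ s := Real.sqrt_le_sqrt hlb
    calc s⁻¹ ≤ (r⁻¹)⁻¹ := inv_anti₀ (by positivity) hrs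
      _ = r := inv_inv r
  refine ⟨hn1, h2, ?_, ?_⟩
  · set q : ℝ := Real.sqrt (1 + r^2) with hqdef
    have hq0 : 0 < q := Real.sqrt_pos.2 (by positivity)
    have hq1 : 1 ≤ q := by
      rw [hqdef, show (1:ℝ) = Real.sqrt 1 by rw [Real.sqrt_one]]
      exact Real.sqrt_le_sqrt (by nlinarith [Real.sq_sqrt (by positivity : (0:ℝ) ≤ 1 + r^2), Real.sqrt_one])
    have hq2 : q ≤ 1 + r := by
      calc q ≤ Real.sqrt ((1+r)^2) := Real.sqrt_le_sqrt (by nlinarith)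
        _ = 1 + r := Real.sqrt_sq (by positivity)
    have hslt : s ≤ q / r := by
      have heq : ((r^2)⁻¹ + 1 : ℝ) = (1 + r^2)/r^2 := by field_simp
      calc s ≤ Real.sqrt ((r^2)⁻¹ + 1) := Real.sqrt_le_sqrt hub.le
        _ = Real.sqrt ((1+r^2)/r^2) := by rw [heq]
        _ = q / Real.sqrt (r^2) := Real.sqrt_div (by positivity) _
        _ = q / r := by rw [Real.sqrt_sq hr.le]
    have hinvs : r * q⁻¹ ≤ s⁻¹ := by
      have h' : (q/r)⁻¹ ≤ s⁻¹ := inv_anti₀ hs hslt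
      rwa [inv_div, div_eq_mul_inv] at h'
    have key1 : 1 - q⁻¹ ≤ r := by
      have hd : q - 1 ≤ r := by linarith
      have h' : (q - 1) * q⁻¹ ≤ r * 1 := by
        calc (q-1) * q⁻¹ ≤ r * q⁻¹ := mul_le_mul_of_nonneg_right hd (inv_nonneg.2 hq0.le)
          _ ≤ r * 1 := mul_le_mul_of_nonneg_left (inv_le_one_of_one_le₀ hq1) hr.le
      rwa [sub_mul, mul_inv_cancel₀ hq0.ne', one_mul, mul_one] at h'
    have h4 : r * (1 - q⁻¹) ≤ r * r := mul_le_mul_of_nonneg_left key1 hr.le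
    nlinarith [hinvs]
  · intro hr1
    have hsr : 0 ≤ s * r := mul_nonneg hs.le hr.le
    have hrr : (r^2)⁻¹ * r^2 = 1 := inv_mul_cancel₀ (by positivity)
    have hsq : (s * r)^2 < 4 := by
      rw [mul_pow, hsdef, Real.sq_sqrt (Nat.cast_nonneg n)]
      nlinarith [sq_nonneg r]
    nlinarith

section Proper
variable [ProperSpace E] {Φ : Set E}

lemma nat_ceil_tendsto_atTop {r : ℕ → ℝ} (hrpos : ∀ j, 0 < r j)
    (hr0 : Tendsto (fun j => r j) atTop (nhds 0)) :
    Tendsto (fun j => (⌈((r j)^2)⁻¹⌉₊ : ℕ)) atTop atTop := by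
  have h1 : Tendsto (fun j => (r j)^2) atTop (nhdsWithin 0 (Set.Ioi 0)) := by
    rw [tendsto_nhdsWithin_iff]
    constructor
    · simpa using hr0.pow 2
    · exact Eventually.of_forall fun j => Set.mem_Ioi.2 (pow_pos (hrpos j) 2)
  have h2 : Tendsto (fun j => ((r j)^2)⁻¹) atTop atTop :=
    tendsto_inv_nhdsGT_zero.comp h1
  have h3 : Tendsto (fun j => (((⌈((r j)^2)⁻¹⌉₊:ℕ)):ℝ)) atTop atTop :=
    tendsto_atTop_mono (fun j => Nat.le_ceil _) h2
  exact tendsto_natCast_atTop_iff.1 h3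

lemma LF_approx_a (h0 : (0:E) ∈ Φ) (φ : ℕ → E) (hφ : ∀ n, φ n ∈ Φ)
    (htd : Tendsto (fun n => ‖φ n‖) atTop (nhds 0)) :
    (fun n => infDist (φ n) (LF Φ)) =o[atTop] fun n => ‖φ n‖ := by
  by_contra hcon
  rw [Asymptotics.isLittleO_iff] at hcon
  push_neg at hcon
  obtain ⟨c, hc, hfreq⟩ := hcon
  have hev1 : ∀ᶠ n in atTop, ‖φ n‖ < 1 := htd.eventually_lt_const one_pos
  obtain ⟨σ, hσmono, hσ⟩ := extraction_of_frequently_atTop (hfreq.and_eventually hev1)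
  set ψ : ℕ → E := fun j => φ (σ j) with hψdef
  have hlt : ∀ j, c * ‖ψ j‖ < infDist (ψ j) (LF Φ) := by
    intro j
    have h := (hσ j).1
    rw [Real.norm_of_nonneg infDist_nonneg, norm_norm] at h
    exact h
  have hψ1 : ∀ j, ‖ψ j‖ < 1 := fun j => (hσ j).2
  have hpos : ∀ j, 0 < ‖ψ j‖ := by
    intro j
    rcases (norm_nonneg (ψ j)).lt_or_eq with h | h
    · exact h
    · exfalso
      have hz : ψ j = 0 := norm_eq_zero.1 h.symm
      have := hlt j
      rw [hz, infDist_zero_of_mem (zero_mem_LF h0), norm_zero, mul_zero] at this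
      exact lt_irrefl 0 this
  set r : ℕ → ℝ := fun j => ‖ψ j‖ with hrdef
  set nn : ℕ → ℕ := fun j => ⌈((r j)^2)⁻¹⌉₊ with hnndef
  have hfacts := fun j => ceil_sqrt_facts (hpos j)
  set uu : ℕ → E := fun j => Real.sqrt (nn j) • ψ j with huudef
  have huumem : ∀ j, uu j ∈ UnF Φ (nn j) := fun j =>
    smul_mem_UnF (hfacts j).1 (hφ (σ j))
  have huubdd : ∀ j, uu j ∈ closedBall (0:E) 2 := by
    intro j
    rw [mem_closedBall_zero_iff, huudef, norm_smul,
      Real.norm_of_nonneg (Real.sqrt_nonneg _)]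
    exact (hfacts j).2.2.2 (hψ1 j).le
  obtain ⟨a, ha, τ, hτmono, hτt⟩ :=
    tendsto_subseq_of_bounded isBounded_closedBall huubdd
  have hrt : Tendsto (fun j => r j) atTop (nhds 0) :=
    htd.comp hσmono.tendsto_atTop
  have hnnt : Tendsto nn atTop atTop := nat_ceil_tendsto_atTop hpos hrt
  have haLF : a ∈ LF Φ := by
    rw [LF, mem_iInter]
    intro N
    refine mem_closure_of_tendsto hτt ?_
    have : ∀ᶠ i in atTop, max 1 N ≤ nn (τ i) :=
      (hnnt.comp hτmono.tendsto_atTop).eventually_ge_atTop (max 1 N)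
    filter_upwards [this] with i hi
    simp only [mem_iUnion, Function.comp_apply]
    exact ⟨nn (τ i), le_trans (le_max_left _ _) hi, le_trans (le_max_right _ _) hi,
      huumem (τ i)⟩
  have hcone := LF_isCone h0 (Φ := Φ)
  have hfar : ∀ i, c < dist (uu (τ i)) a := by
    intro i
    set j := τ i
    have hs := sqrt_pos' (hfacts j).1
    have hmem : (Real.sqrt (nn j))⁻¹ • a ∈ LF Φ :=
      hcone.2 a haLF _ (inv_nonneg.2 hs.le)
    have hψeq : ψ j = (Real.sqrt (nn j))⁻¹ • uu j := by
      rw [huudef, inv_smul_smul₀ hs.ne']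
    have hle : infDist (ψ j) (LF Φ) ≤ (Real.sqrt (nn j))⁻¹ * dist (uu j) a := by
      calc infDist (ψ j) (LF Φ) ≤ dist (ψ j) ((Real.sqrt (nn j))⁻¹ • a) :=
            infDist_le_dist_of_mem hmem
        _ = (Real.sqrt (nn j))⁻¹ * dist (uu j) a := by
            rw [hψeq, dist_smul₀, Real.norm_of_nonneg (inv_nonneg.2 hs.le)]
    have hrlow : (Real.sqrt (nn j))⁻¹ ≤ r j := (hfacts j).2.1
    have h1 : c * (Real.sqrt (nn j))⁻¹ < (Real.sqrt (nn j))⁻¹ * dist (uu j) a := by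
      calc c * (Real.sqrt (nn j))⁻¹ ≤ c * r j :=
            mul_le_mul_of_nonneg_left hrlow hc.le
        _ < infDist (ψ j) (LF Φ) := hlt j
        _ ≤ (Real.sqrt (nn j))⁻¹ * dist (uu j) a := hle
    have hip : 0 < (Real.sqrt (nn j))⁻¹ := inv_pos.2 hs
    nlinarith
  have : ∀ᶠ i in atTop, dist (uu (τ i)) a < c := by
    have := hτt.eventually (Metric.ball_mem_nhds a hc)
    simpa [Function.comp, dist_comm] using this
  obtain ⟨i, hi⟩ := this.exists
  exact absurd (hfar i) (not_lt.2 hi.le)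

lemma LF_approx_b (h0 : (0:E) ∈ Φ) (hA3 : LF Φ ⊆ limSetNat (UnF Φ))
    (lam : ℕ → E) (hlam : ∀ n, lam n ∈ LF Φ)
    (htd : Tendsto (fun n => ‖lam n‖) atTop (nhds 0)) :
    (fun n => infDist (lam n) Φ) =o[atTop] fun n => ‖lam n‖ := by
  by_contra hcon
  rw [Asymptotics.isLittleO_iff] at hcon
  push_neg at hcon
  obtain ⟨c, hc, hfreq⟩ := hcon
  have hδ : (0:ℝ) < min 1 (c/4) := lt_min one_pos (by positivity)
  have hev1 : ∀ᶠ n in atTop, ‖lam n‖ < min 1 (c/4) := htd.eventually_lt_const hδ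
  obtain ⟨σ, hσmono, hσ⟩ := extraction_of_frequently_atTop (hfreq.and_eventually hev1)
  set ψ : ℕ → E := fun j => lam (σ j) with hψdef
  have hlt : ∀ j, c * ‖ψ j‖ < infDist (ψ j) Φ := by
    intro j
    have h := (hσ j).1
    rw [Real.norm_of_nonneg infDist_nonneg, norm_norm] at h
    exact h
  have hψ1 : ∀ j, ‖ψ j‖ < min 1 (c/4) := fun j => (hσ j).2
  have hpos : ∀ j, 0 < ‖ψ j‖ := by
    intro j
    rcases (norm_nonneg (ψ j)).lt_or_eq with h | h
    · exact h
    · exfalso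
      have hz : ψ j = 0 := norm_eq_zero.1 h.symm
      have := hlt j
      rw [hz, infDist_zero_of_mem h0, norm_zero, mul_zero] at this
      exact lt_irrefl 0 this
  set r : ℕ → ℝ := fun j => ‖ψ j‖ with hrdef
  set w : ℕ → E := fun j => (r j)⁻¹ • ψ j with hwdef
  have hcone := LF_isCone h0 (Φ := Φ)
  have hwmem : ∀ j, w j ∈ LF Φ := fun j =>
    hcone.2 (ψ j) (hlam (σ j)) _ (inv_nonneg.2 (hpos j).le)
  have hwnorm : ∀ j, ‖w j‖ = 1 := by
    intro j
    rw [hwdef]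
    simp only
    rw [norm_smul, Real.norm_of_nonneg (inv_nonneg.2 (hpos j).le),
      inv_mul_cancel₀ (hpos j).ne']
  have hwbdd : ∀ j, w j ∈ closedBall (0:E) 1 := fun j => by
    rw [mem_closedBall_zero_iff, hwnorm j]
  obtain ⟨a, ha, τ, hτmono, hτt⟩ :=
    tendsto_subseq_of_bounded isBounded_closedBall hwbdd
  have haLF : a ∈ LF Φ := by
    have hclosed : IsClosed (LF Φ) := isClosed_iInter fun _ => isClosed_closure
    exact hclosed.mem_of_tendsto hτt (Eventually.of_forall fun i => hwmem (τ i))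
  have hanorm : ‖a‖ ≤ 1 := by
    rw [closure_closedBall] at ha
    exact mem_closedBall_zero_iff.1 ha
  have halim := hA3 haLF
  rw [limSetNat] at halim
  simp only [mem_iInter, mem_iUnion] at halim
  obtain ⟨N, hN⟩ := halim (c/4) (by positivity)
  have hrt : Tendsto (fun j => r j) atTop (nhds 0) :=
    htd.comp hσmono.tendsto_atTop
  have hnnt : Tendsto (fun j => (⌈((r j)^2)⁻¹⌉₊:ℕ)) atTop atTop :=
    nat_ceil_tendsto_atTop hpos hrt
  have hevN : ∀ᶠ i in atTop, N ≤ ⌈((r (τ i))^2)⁻¹⌉₊ :=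
    (hnnt.comp hτmono.tendsto_atTop).eventually_ge_atTop N
  have hevd : ∀ᶠ i in atTop, dist (w (τ i)) a < c/4 := by
    have := hτt.eventually (Metric.ball_mem_nhds a (by positivity : (0:ℝ) < c/4))
    simpa [Function.comp, dist_comm] using this
  obtain ⟨i, hiN, hid⟩ := (hevN.and hevd).exists
  set j := τ i
  have hfacts := ceil_sqrt_facts (hpos j)
  set nn : ℕ := ⌈((r j)^2)⁻¹⌉₊
  have hs := sqrt_pos' hfacts.1
  have hth := hN nn hfacts.1 hiN
  rw [mem_thickening_iff] at hth
  obtain ⟨v, hvU, hdav⟩ := hth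
  have hxΦ : (Real.sqrt nn)⁻¹ • v ∈ Φ := mem_UnF.1 hvU
  have hψeq : ψ j = r j • w j := by
    rw [hwdef]
    simp only
    rw [smul_inv_smul₀ (hpos j).ne']
  have hest : infDist (ψ j) Φ ≤
      r j * dist (w j) a + |r j - (Real.sqrt nn)⁻¹| * ‖a‖
        + (Real.sqrt nn)⁻¹ * dist a v := by
    calc infDist (ψ j) Φ ≤ dist (ψ j) ((Real.sqrt nn)⁻¹ • v) :=
          infDist_le_dist_of_mem hxΦ
      _ ≤ dist (ψ j) (r j • a) + dist (r j • a) ((Real.sqrt nn)⁻¹ • a)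
          + dist ((Real.sqrt nn)⁻¹ • a) ((Real.sqrt nn)⁻¹ • v) := dist_triangle4 _ _ _ _
      _ = r j * dist (w j) a + |r j - (Real.sqrt nn)⁻¹| * ‖a‖
          + (Real.sqrt nn)⁻¹ * dist a v := by
          have e1 : dist (ψ j) (r j • a) = r j * dist (w j) a := by
            rw [hψeq, dist_smul₀, Real.norm_of_nonneg (hpos j).le]
          have e2 : dist (r j • a) ((Real.sqrt nn)⁻¹ • a)
              = |r j - (Real.sqrt nn)⁻¹| * ‖a‖ := by
            rw [dist_eq_norm, ← sub_smul, norm_smul, Real.norm_eq_abs]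
          have e3 : dist ((Real.sqrt nn)⁻¹ • a) ((Real.sqrt nn)⁻¹ • v)
              = (Real.sqrt nn)⁻¹ * dist a v := by
            rw [dist_smul₀, Real.norm_of_nonneg (inv_nonneg.2 hs.le)]
          rw [e1, e2, e3]
  have habs : |r j - (Real.sqrt nn)⁻¹| ≤ r j * r j := by
    rw [abs_of_nonneg (by linarith [hfacts.2.1])]
    exact hfacts.2.2.1
  have hrc : r j < c/4 := lt_of_lt_of_le (hψ1 j) (min_le_right _ _)
  have hr1 : r j < 1 := lt_of_lt_of_le (hψ1 j) (min_le_left _ _)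
  have hcontr : c * r j < r j * (c/4) + r j * (c/4) + r j * (c/4) := by
    calc c * r j < infDist (ψ j) Φ := hlt j
      _ ≤ r j * dist (w j) a + |r j - (Real.sqrt nn)⁻¹| * ‖a‖
          + (Real.sqrt nn)⁻¹ * dist a v := hest
      _ ≤ r j * (c/4) + r j * (c/4) + r j * (c/4) := by
          have t1 : r j * dist (w j) a ≤ r j * (c/4) :=
            mul_le_mul_of_nonneg_left hid.le (hpos j).le
          have t2 : |r j - (Real.sqrt nn)⁻¹| * ‖a‖ ≤ r j * (c/4) := by
            calc |r j - (Real.sqrt nn)⁻¹| * ‖a‖ ≤ (r j * r j) * 1 :=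
                  mul_le_mul habs hanorm (norm_nonneg _) (by positivity)
              _ = r j * r j := mul_one _
              _ ≤ r j * (c/4) := mul_le_mul_of_nonneg_left hrc.le (hpos j).le
          have t3 : (Real.sqrt nn)⁻¹ * dist a v ≤ r j * (c/4) := by
            apply mul_le_mul hfacts.2.1 hdav.le
              dist_nonneg (hpos j).le
          linarith
  nlinarith [hpos j]


end Proper

/-- Theorem 2.3 (ii): with `U_n = n^{1/2}(Θ - θ*)`, condition [A3] holds iff
`Θ - θ*` is locally approximated by some cone `Λ`, and in that case `U = closure Λ`. -/
theorem A3_iff_locallyApprox (p : ℕ) (Θ : Set (EuclideanSpace ℝ (Fin p)))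
    (θs : EuclideanSpace ℝ (Fin p)) (hθs : θs ∈ Θ) :
    (((⋂ N : ℕ, closure (⋃ (n : ℕ) (_ : 1 ≤ n) (_ : N ≤ n),
        {u : EuclideanSpace ℝ (Fin p) | θs + ((n : ℝ) ^ (-(1/2 : ℝ))) • u ∈ Θ})) ⊆
      limSetNat (fun n => {u : EuclideanSpace ℝ (Fin p) | θs + ((n : ℝ) ^ (-(1/2 : ℝ))) • u ∈ Θ}))
      ↔ ∃ Λ : Set (EuclideanSpace ℝ (Fin p)), IsCone Λ ∧ LocallyApprox Θ θs Λ) ∧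
    (∀ Λ : Set (EuclideanSpace ℝ (Fin p)), IsCone Λ → LocallyApprox Θ θs Λ →
      limSetNat (fun n => {u : EuclideanSpace ℝ (Fin p) | θs + ((n : ℝ) ^ (-(1/2 : ℝ))) • u ∈ Θ})
        = closure Λ) := by
  set Φ : Set (EuclideanSpace ℝ (Fin p)) := {x | θs + x ∈ Θ} with hΦdef
  have h0 : (0 : EuclideanSpace ℝ (Fin p)) ∈ Φ := by
    simp only [hΦdef, mem_setOf_eq, add_zero]
    exact hθs
  have hUn : (fun n : ℕ => {u : EuclideanSpace ℝ (Fin p) |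
      θs + ((n : ℝ) ^ (-(1/2 : ℝ))) • u ∈ Θ}) = UnF Φ := rfl
  have hLeq : (⋂ N : ℕ, closure (⋃ (n : ℕ) (_ : 1 ≤ n) (_ : N ≤ n),
      {u : EuclideanSpace ℝ (Fin p) | θs + ((n : ℝ) ^ (-(1/2 : ℝ))) • u ∈ Θ})) = LF Φ := rfl
  constructor
  · constructor
    · intro hA3
      rw [hLeq, hUn] at hA3
      refine ⟨LF Φ, LF_isCone h0, ?_, ?_⟩
      · intro φ hφΘ htd
        exact LF_approx_a h0 φ hφΘ htd
      · intro lam hlamL htd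
        exact LF_approx_b h0 hA3 lam hlamL htd
    · rintro ⟨Λ, hcone, ha, hb⟩
      rw [hLeq, hUn]
      intro u hu
      exact closure_subset_limSet hcone h0 hb (LF_subset_closure hcone ha hu)
  · intro Λ hcone hLA
    rw [hUn]
    apply subset_antisymm
    · intro u hu
      exact LF_subset_closure hcone hLA.1 (limSet_subset_LF hu)
    · exact closure_subset_limSet hcone h0 hLA.2
end

section
/- Let $\Theta \subset \mathbb{R}^p$, $\theta^* \in \Theta$, $U_n = n^{1/2}(\Theta - \theta^*)$ for $n \in \mathbb{Z}_{\geq 1}$, and suppose $U = \bigcap_{\delta>0}\bigcup_{N\geq1}\bigcap_{n\geq N}(U_n)^\delta$ is a cone satisfying $U \supset \bigcap_{N\geq 1}\overline{\bigcup_{n\geq N} U_n}$. Then for any sequence $\phi_n \in \Theta - \theta^*$ with $0 \neq |\phi_n| \to 0$, one has $d(\phi_n, U) = o(|\phi_n|)$. -/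
open Metric Set Filter Pointwise

/-- with `U_n = n^{1/2}(Θ - θ*)`, if `U` (the limit set) is a cone and [A3]
holds, then `d(φ_n, U) = o(|φ_n|)` for any sequence `φ_n ∈ Θ - θ*` with `0 ≠ |φ_n| → 0`. -/
theorem infDist_littleO_of_cone_A3 (p : ℕ) (Θ : Set (EuclideanSpace ℝ (Fin p)))
    (θs : EuclideanSpace ℝ (Fin p)) (hθs : θs ∈ Θ)
    (hcone : ∀ u ∈ limSetNat
        (fun n => {u : EuclideanSpace ℝ (Fin p) | θs + ((n : ℝ) ^ (-(1/2 : ℝ))) • u ∈ Θ}),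
      ∀ t : ℝ, 0 ≤ t →
        t • u ∈ limSetNat
          (fun n => {u : EuclideanSpace ℝ (Fin p) | θs + ((n : ℝ) ^ (-(1/2 : ℝ))) • u ∈ Θ}))
    (hA3 : (⋂ N : ℕ, closure (⋃ (n : ℕ) (_ : 1 ≤ n) (_ : N ≤ n),
        {u : EuclideanSpace ℝ (Fin p) | θs + ((n : ℝ) ^ (-(1/2 : ℝ))) • u ∈ Θ})) ⊆
      limSetNat (fun n => {u : EuclideanSpace ℝ (Fin p) | θs + ((n : ℝ) ^ (-(1/2 : ℝ))) • u ∈ Θ}))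
    (φ : ℕ → EuclideanSpace ℝ (Fin p))
    (hφΘ : ∀ n, θs + φ n ∈ Θ) (hφne : ∀ n, φ n ≠ 0)
    (hφ0 : Tendsto (fun n => ‖φ n‖) atTop (nhds 0)) :
    (fun n => Metric.infDist (φ n)
        (limSetNat (fun n => {u : EuclideanSpace ℝ (Fin p) | θs + ((n : ℝ) ^ (-(1/2 : ℝ))) • u ∈ Θ})))
      =o[atTop] fun n => ‖φ n‖ := by
  set Us : ℕ → Set (EuclideanSpace ℝ (Fin p)) :=
    fun n => {u : EuclideanSpace ℝ (Fin p) | θs + ((n : ℝ) ^ (-(1/2 : ℝ))) • u ∈ Θ} with hUsdef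
  set U : Set (EuclideanSpace ℝ (Fin p)) := limSetNat Us with hUdef
  -- 0 belongs to every Us n, hence to U
  have hUs0 : ∀ n, (0 : EuclideanSpace ℝ (Fin p)) ∈ Us n := by
    intro n
    show θs + ((n : ℝ) ^ (-(1/2 : ℝ))) • (0 : EuclideanSpace ℝ (Fin p)) ∈ Θ
    simpa using hθs
  have hU0 : (0 : EuclideanSpace ℝ (Fin p)) ∈ U := by
    rw [hUdef, limSetNat]
    simp only [mem_iInter, mem_iUnion]
    intro δ hδ
    exact ⟨0, fun n _ _ => self_subset_thickening hδ _ (hUs0 n)⟩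
  have hUne : U.Nonempty := ⟨0, hU0⟩
  -- the cone property shrinks infDist
  have hshrink : ∀ (v : EuclideanSpace ℝ (Fin p)) (t : ℝ), 0 ≤ t → infDist (t • v) U ≤ t * infDist v U := by
    intro v t ht
    rcases eq_or_lt_of_le ht with h0 | h0
    · rw [← h0, zero_smul, zero_mul, infDist_zero_of_mem hU0]
    · have hsub : t • U ⊆ U := by
        rintro x ⟨u, hu, rfl⟩
        exact hcone u hu t ht
      have hne : (t • U).Nonempty := ⟨t • 0, smul_mem_smul_set hU0⟩
      calc infDist (t • v) U ≤ infDist (t • v) (t • U) :=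
            infDist_le_infDist_of_subset hsub hne
        _ = ‖t‖ * infDist v U := infDist_smul₀ h0.ne' U v
        _ = t * infDist v U := by rw [Real.norm_of_nonneg ht]
  have hφpos : ∀ n, 0 < ‖φ n‖ := fun n => norm_pos_iff.2 (hφne n)
  -- the scaling sequence
  set T : ℕ → ℕ := fun n => ⌈(‖φ n‖⁻¹) ^ 2⌉₊ with hTdef
  have hT1 : ∀ n, 1 ≤ T n := fun n =>
    Nat.one_le_ceil_iff.2 (pow_pos (inv_pos.2 (hφpos n)) 2)
  have hTposR : ∀ n, (0 : ℝ) < (T n : ℝ) := fun n => by exact_mod_cast hT1 n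
  have hTle : ∀ n, (‖φ n‖⁻¹) ^ 2 ≤ (T n : ℝ) := fun n => Nat.le_ceil _
  have hTlt : ∀ n, (T n : ℝ) < (‖φ n‖⁻¹) ^ 2 + 1 := fun n =>
    Nat.ceil_lt_add_one (by positivity)
  set s : ℕ → ℝ := fun n => (T n : ℝ) ^ ((1:ℝ)/2) with hsdef
  have hspos : ∀ n, 0 < s n := fun n => Real.rpow_pos_of_pos (hTposR n) _
  have hsq : ∀ n, s n ^ 2 = (T n : ℝ) := by
    intro n
    rw [hsdef]
    rw [← Real.rpow_natCast ((T n : ℝ) ^ ((1:ℝ)/2)) 2, ← Real.rpow_mul (hTposR n).le]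
    norm_num
  set v : ℕ → EuclideanSpace ℝ (Fin p) := fun n => s n • φ n with hvdef
  have hvmem : ∀ n, v n ∈ Us (T n) := by
    intro n
    show θs + ((T n : ℝ) ^ (-(1/2 : ℝ))) • (s n • φ n) ∈ Θ
    rw [smul_smul, hsdef]
    rw [← Real.rpow_add (hTposR n)]
    have hexp : (-(1/2 : ℝ)) + 1/2 = 0 := by norm_num
    rw [hexp, Real.rpow_zero, one_smul]
    exact hφΘ n
  have hφv : ∀ n, φ n = (s n)⁻¹ • v n := by
    intro n
    rw [hvdef, smul_smul, inv_mul_cancel₀ (hspos n).ne', one_smul]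
  have hone_le : ∀ n, 1 ≤ s n * ‖φ n‖ := by
    intro n
    have h1 : ‖φ n‖⁻¹ * ‖φ n‖ = 1 := inv_mul_cancel₀ (hφpos n).ne'
    have h3 := mul_le_mul_of_nonneg_right (hTle n) (sq_nonneg ‖φ n‖)
    rw [← mul_pow, h1, one_pow] at h3
    have h2 : 1 ≤ (s n * ‖φ n‖) ^ 2 := by nlinarith [hsq n]
    nlinarith [h2, mul_nonneg (hspos n).le (norm_nonneg (φ n))]
  have hsinv : ∀ n, (s n)⁻¹ ≤ ‖φ n‖ := by
    intro n
    calc (s n)⁻¹ = (s n)⁻¹ * 1 := (mul_one _).symm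
      _ ≤ (s n)⁻¹ * (s n * ‖φ n‖) :=
          mul_le_mul_of_nonneg_left (hone_le n) (inv_nonneg.2 (hspos n).le)
      _ = ‖φ n‖ := inv_mul_cancel_left₀ (hspos n).ne' _
  -- T tends to infinity
  have hTtop : ∀ N : ℕ, ∀ᶠ n in atTop, N ≤ T n := by
    intro N
    have hpos : (0 : ℝ) < 1 / (N + 1) := by positivity
    filter_upwards [hφ0.eventually_lt_const hpos] with n hn
    have hNlt : (N : ℝ) < (‖φ n‖⁻¹) ^ 2 := by
      have h2 : (N : ℝ) + 1 ≤ ‖φ n‖⁻¹ := by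
        rw [le_inv_comm₀ (by positivity) (hφpos n)]
        calc ‖φ n‖ ≤ 1 / (N + 1) := hn.le
          _ = ((N : ℝ) + 1)⁻¹ := one_div _
      nlinarith [Nat.cast_nonneg (α := ℝ) N]
    have : N + 1 ≤ T n := Nat.add_one_le_ceil_iff.2 hNlt
    omega
  -- the key compactness step
  set Z : ℕ → Set (EuclideanSpace ℝ (Fin p)) := fun N => closure (⋃ (n : ℕ) (_ : 1 ≤ n) (_ : N ≤ n), Us n) with hZdef
  have hZanti : ∀ {N M : ℕ}, N ≤ M → Z M ⊆ Z N := by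
    intro N M hNM
    apply closure_mono
    refine iUnion_mono fun n => iUnion_mono fun h1 => ?_
    exact iUnion_subset fun hM => subset_iUnion_of_subset (hNM.trans hM) (subset_rfl)
  have key : ∀ ε > (0:ℝ), ∃ N : ℕ, ∀ x ∈ closedBall (0 : EuclideanSpace ℝ (Fin p)) 2, x ∈ Z N → infDist x U < ε := by
    intro ε hε
    set C : Set (EuclideanSpace ℝ (Fin p)) :=
      closedBall (0 : EuclideanSpace ℝ (Fin p)) 2 ∩
        {x : EuclideanSpace ℝ (Fin p) | ε ≤ infDist x U} with hCdef
    have hCcomp : IsCompact C :=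
      (isCompact_closedBall _ _).inter_right
        (isClosed_le continuous_const (continuous_infDist_pt U))
    have hempty : C ∩ ⋂ N, Z N = ∅ := by
      apply eq_empty_iff_forall_notMem.2
      rintro x ⟨hxC, hxZ⟩
      have hxU : x ∈ U := hA3 hxZ
      have h0 : infDist x U = 0 := infDist_zero_of_mem hxU
      have hεle : ε ≤ infDist x U := hxC.2
      linarith
    obtain ⟨t, ht⟩ := hCcomp.elim_finite_subfamily_closed Z (fun N => isClosed_closure) hempty
    refine ⟨t.sup id, fun x hx hxZ => ?_⟩
    by_contra hcon
    push_neg at hcon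
    have hxC : x ∈ C := ⟨hx, hcon⟩
    have hxAll : x ∈ ⋂ i ∈ t, Z i := by
      refine mem_iInter₂.2 fun i hi => ?_
      exact hZanti (Finset.le_sup (f := id) hi) hxZ
    exact absurd (ht ▸ (mem_inter hxC hxAll)) (by simp)
  -- conclusion
  rw [Asymptotics.isLittleO_iff]
  intro ε hε
  obtain ⟨N, hN⟩ := key ε hε
  filter_upwards [hTtop N, hφ0.eventually_lt_const one_pos] with n hTn hφ1
  have hv2 : ‖v n‖ ≤ 2 := by
    have hnv : ‖v n‖ = s n * ‖φ n‖ := by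
      rw [hvdef, norm_smul, Real.norm_of_nonneg (hspos n).le]
    have h1 : ‖φ n‖⁻¹ * ‖φ n‖ = 1 := inv_mul_cancel₀ (hφpos n).ne'
    rw [hnv]
    nlinarith [hTlt n, hsq n, hspos n, hφpos n, hφ1.le, mul_pos (hspos n) (hφpos n),
      sq_nonneg (s n * ‖φ n‖ - 2), sq_nonneg (‖φ n‖)]
  have hZmem : v n ∈ Z N :=
    subset_closure (mem_iUnion.2 ⟨T n, mem_iUnion.2 ⟨hT1 n, mem_iUnion.2 ⟨hTn, hvmem n⟩⟩⟩)
  have hlt : infDist (v n) U < ε := hN (v n) (mem_closedBall_zero_iff.2 hv2) hZmem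
  calc ‖infDist (φ n) U‖ = infDist (φ n) U := Real.norm_of_nonneg infDist_nonneg
    _ ≤ (s n)⁻¹ * infDist (v n) U := by
        have h := hshrink (v n) (s n)⁻¹ (inv_nonneg.2 (hspos n).le)
        rwa [← hφv n] at h
    _ ≤ ‖φ n‖ * ε := mul_le_mul (hsinv n) hlt.le infDist_nonneg (norm_nonneg _)
    _ = ε * ‖‖φ n‖‖ := by rw [Real.norm_of_nonneg (norm_nonneg _)]; ring
end

section
/- Let $\gamma > 0$, $0 < r < 1$, $\lambda > 0$, and $A, C \in \mathbb{R}$. Consider $f(w) = C + A w - \gamma w^2 - \lambda |w|^{r}$ on $\mathbb{R}$. Then the set of maximizers of $f$ on $\mathbb{R}$ contains at most two points, and if $0$ is not a maximizer then the maximizer is unique. More precisely, the set of global maximizers of $f$ is contained in $\{0\} \cup \{w^+\}$ for at most one nonzero point $w^+$, except for parameter values lying in a set where $f(0) = f(w^+)$. -/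
open Set Filter Topology

 
lemma bridge_no_lt (γ lam r A C : ℝ) (hγ : 0 < γ) (hlam : 0 < lam)
    (hr0 : 0 < r) (hr1 : r < 1) {a b : ℝ} (ha : 0 < a) (hb : 0 < b)
    (hma : ∀ v : ℝ, C + A * v - γ * v ^ 2 - lam * |v| ^ r ≤ C + A * a - γ * a ^ 2 - lam * |a| ^ r)
    (hmb : ∀ v : ℝ, C + A * v - γ * v ^ 2 - lam * |v| ^ r ≤ C + A * b - γ * b ^ 2 - lam * |b| ^ r)
    (hab : a < b) : False := by
  set f : ℝ → ℝ := fun v => C + A * v - γ * v ^ 2 - lam * |v| ^ r with hf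
  set g : ℝ → ℝ := fun x => A - 2 * γ * x - lam * (r * x ^ (r - 1)) with hg
  set g' : ℝ → ℝ := fun x => -(2 * γ) - lam * (r * ((r - 1) * x ^ (r - 2))) with hg'
  have hder : ∀ x : ℝ, 0 < x → HasDerivAt f (g x) x := by
    intro x hx
    have hp : HasDerivAt (fun v : ℝ => v ^ r) (r * x ^ (r - 1)) x :=
      Real.hasDerivAt_rpow_const (Or.inl hx.ne')
    have h1 : HasDerivAt (fun v : ℝ => C + A * v - γ * v ^ 2 - lam * v ^ r) (g x) x := by
      have hA : HasDerivAt (fun v : ℝ => C + A * v) A x := by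
        simpa using ((hasDerivAt_id x).const_mul A).const_add C
      have hq : HasDerivAt (fun v : ℝ => γ * v ^ 2) (γ * (2 * x)) x := by
        simpa using (hasDerivAt_pow 2 x).const_mul γ
      have := (hA.sub hq).sub (hp.const_mul lam)
      convert this using 1
      show A - 2 * γ * x - lam * (r * x ^ (r - 1)) = _; ring
      all_goals rfl
    apply h1.congr_of_eventuallyEq
    filter_upwards [Ioi_mem_nhds hx] with v hv
    simp [hf, abs_of_pos (mem_Ioi.mp hv)]
  have hgder : ∀ x : ℝ, 0 < x → HasDerivAt g (g' x) x := by
    intro x hx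
    have hp : HasDerivAt (fun v : ℝ => v ^ (r - 1)) ((r - 1) * x ^ (r - 1 - 1)) x :=
      Real.hasDerivAt_rpow_const (Or.inl hx.ne')
    rw [show r - 1 - 1 = r - 2 by ring] at hp
    have hA : HasDerivAt (fun v : ℝ => A - 2 * γ * v) (0 - 2 * γ * 1) x :=
      (hasDerivAt_const x A).sub ((hasDerivAt_id x).const_mul (2 * γ))
    have := hA.sub ((hp.const_mul r).const_mul lam)
    convert this using 1
    show -(2 * γ) - lam * (r * ((r - 1) * x ^ (r - 2))) = _; ring
    all_goals rfl
  have hfab : f a = f b := le_antisymm (hmb a) (hma b)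
  have hposIcc : ∀ x ∈ Icc a b, (0:ℝ) < x := fun x hx => lt_of_lt_of_le ha hx.1
  have hla : IsLocalMax f a := Filter.Eventually.of_forall hma
  have hga : g a = 0 := hla.hasDerivAt_eq_zero (hder a ha)
  have hcf : ContinuousOn f (Icc a b) := fun x hx =>
    ((hder x (hposIcc x hx)).continuousAt).continuousWithinAt
  obtain ⟨c, hc, hgc⟩ := exists_hasDerivAt_eq_slope f g hab hcf
    (fun x hx => hder x (hposIcc x (Ioo_subset_Icc_self hx)))
  rw [hfab, sub_self, zero_div] at hgc
  have hlb : IsLocalMax f b := Filter.Eventually.of_forall hmb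
  have hgb : g b = 0 := hlb.hasDerivAt_eq_zero (hder b hb)
  have hcpos : 0 < c := lt_trans ha hc.1
  have hcg : ∀ s t : ℝ, a ≤ s → s < t → t ≤ b → ContinuousOn g (Icc s t) := by
    intro s t hs hst htb x hx
    exact ((hgder x (hposIcc x ⟨le_trans hs hx.1, le_trans hx.2 htb⟩)).continuousAt).continuousWithinAt
  obtain ⟨p, hp, hgp⟩ := exists_hasDerivAt_eq_zero hc.1 (hcg a c le_rfl hc.1 hc.2.le)
    (hga.trans hgc.symm)
    (fun x hx => hgder x (hposIcc x ⟨hx.1.le, le_trans hx.2.le hc.2.le⟩))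
  obtain ⟨q, hq, hgq⟩ := exists_hasDerivAt_eq_zero hc.2 (hcg c b hc.1.le hc.2 le_rfl)
    (hgc.trans hgb.symm)
    (fun x hx => hgder x (hposIcc x ⟨le_trans hc.1.le hx.1.le, hx.2.le⟩))
  -- p < q, g' p = g' q = 0, contradiction with strict antitonicity of x ^ (r-2)
  have hppos : 0 < p := lt_trans ha hp.1
  have hpq : p < q := lt_trans hp.2 hq.1
  have hlt : q ^ (r - 2) < p ^ (r - 2) :=
    Real.rpow_lt_rpow_of_neg hppos hpq (by linarith)
  have h1 : lam * (r * ((r - 1) * p ^ (r - 2))) = -(2 * γ) := by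
    simp [hg'] at hgp; linarith
  have h2 : lam * (r * ((r - 1) * q ^ (r - 2))) = -(2 * γ) := by
    simp [hg'] at hgq; linarith
  have h1r : 0 < 1 - r := by linarith
  have hcoef : 0 < lam * (r * (1 - r)) := by positivity
  nlinarith [mul_pos hcoef (sub_pos.mpr hlt), h1, h2]


lemma bridge_pos_eq (γ lam r A C : ℝ) (hγ : 0 < γ) (hlam : 0 < lam)
    (hr0 : 0 < r) (hr1 : r < 1) {a b : ℝ} (ha : 0 < a) (hb : 0 < b)
    (hma : ∀ v : ℝ, C + A * v - γ * v ^ 2 - lam * |v| ^ r ≤ C + A * a - γ * a ^ 2 - lam * |a| ^ r)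
    (hmb : ∀ v : ℝ, C + A * v - γ * v ^ 2 - lam * |v| ^ r ≤ C + A * b - γ * b ^ 2 - lam * |b| ^ r) :
    a = b := by
  rcases lt_trichotomy a b with h | h | h
  · exact absurd (bridge_no_lt γ lam r A C hγ hlam hr0 hr1 ha hb hma hmb h) not_false
  · exact h
  · exact absurd (bridge_no_lt γ lam r A C hγ hlam hr0 hr1 hb ha hmb hma h) not_false

lemma bridge_nonzero_eq (γ lam r A C : ℝ) (hγ : 0 < γ) (hlam : 0 < lam)
    (hr0 : 0 < r) (hr1 : r < 1) {a b : ℝ} (ha : a ≠ 0) (hb : b ≠ 0)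
    (hma : ∀ v : ℝ, C + A * v - γ * v ^ 2 - lam * |v| ^ r ≤ C + A * a - γ * a ^ 2 - lam * |a| ^ r)
    (hmb : ∀ v : ℝ, C + A * v - γ * v ^ 2 - lam * |v| ^ r ≤ C + A * b - γ * b ^ 2 - lam * |b| ^ r) :
    a = b := by
  have mixed : ∀ x y : ℝ, x < 0 → 0 < y →
      (∀ v : ℝ, C + A * v - γ * v ^ 2 - lam * |v| ^ r ≤ C + A * x - γ * x ^ 2 - lam * |x| ^ r) →
      (∀ v : ℝ, C + A * v - γ * v ^ 2 - lam * |v| ^ r ≤ C + A * y - γ * y ^ 2 - lam * |y| ^ r) →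
      False := by
    intro x y hx hy hmx hmy
    have e1 := hmx (-x)
    have e2 := hmy (-y)
    rw [show (-x) ^ 2 = x ^ 2 by ring, abs_neg] at e1
    rw [show (-y) ^ 2 = y ^ 2 by ring, abs_neg] at e2
    have hAx : 0 ≤ A * x := by nlinarith
    have hAy : 0 ≤ A * y := by nlinarith
    have hA : A = 0 := by nlinarith
    have e0 := hmy 0
    rw [abs_zero, Real.zero_rpow hr0.ne'] at e0
    have hry : 0 < |y| ^ r := Real.rpow_pos_of_pos (abs_pos.mpr hy.ne') r
    nlinarith
  have refl_max : ∀ x : ℝ,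
      (∀ v : ℝ, C + A * v - γ * v ^ 2 - lam * |v| ^ r ≤ C + A * x - γ * x ^ 2 - lam * |x| ^ r) →
      (∀ v : ℝ, C + (-A) * v - γ * v ^ 2 - lam * |v| ^ r ≤
        C + (-A) * (-x) - γ * (-x) ^ 2 - lam * |(-x)| ^ r) := by
    intro x hmx v
    have := hmx (-v)
    rw [show (-v) ^ 2 = v ^ 2 by ring, abs_neg] at this
    rw [show (-x) ^ 2 = x ^ 2 by ring, abs_neg]
    linarith
  rcases ha.lt_or_gt with ha' | ha' <;> rcases hb.lt_or_gt with hb' | hb'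
  · have := bridge_pos_eq γ lam r (-A) C hγ hlam hr0 hr1 (neg_pos.mpr ha') (neg_pos.mpr hb')
      (refl_max a hma) (refl_max b hmb)
    linarith
  · exact absurd (mixed a b ha' hb' hma hmb) not_false
  · exact absurd (mixed b a hb' ha' hmb hma) not_false
  · exact bridge_pos_eq γ lam r A C hγ hlam hr0 hr1 ha' hb' hma hmb

/-- for `f(w) = C + Aw - γw² - λ|w|^r` with `γ, λ > 0` and `0 < r < 1`, the set
of global maximizers of `f` on `ℝ` is contained in `{0, w⁺}` for some point `w⁺`, so it has
at most two elements; and if `0` is not a maximizer then the maximizer is unique. -/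
theorem bridge_penalty_maximizers (γ lam r A C : ℝ)
    (hγ : 0 < γ) (hlam : 0 < lam) (hr0 : 0 < r) (hr1 : r < 1) :
    ∃ wplus : ℝ,
      {w : ℝ | ∀ v : ℝ,
          C + A * v - γ * v ^ 2 - lam * |v| ^ r ≤ C + A * w - γ * w ^ 2 - lam * |w| ^ r} ⊆
        {0, wplus} ∧
      ((0 : ℝ) ∉ {w : ℝ | ∀ v : ℝ,
          C + A * v - γ * v ^ 2 - lam * |v| ^ r ≤ C + A * w - γ * w ^ 2 - lam * |w| ^ r} →
        Set.Subsingleton {w : ℝ | ∀ v : ℝ,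
          C + A * v - γ * v ^ 2 - lam * |v| ^ r ≤ C + A * w - γ * w ^ 2 - lam * |w| ^ r}) := by
  set S := {w : ℝ | ∀ v : ℝ,
      C + A * v - γ * v ^ 2 - lam * |v| ^ r ≤ C + A * w - γ * w ^ 2 - lam * |w| ^ r} with hS
  have huniq : ∀ x ∈ S, ∀ y ∈ S, x ≠ 0 → y ≠ 0 → x = y := fun x hx y hy hx0 hy0 =>
    bridge_nonzero_eq γ lam r A C hγ hlam hr0 hr1 hx0 hy0 hx hy
  have hsub : ∀ wplus : ℝ, (0:ℝ) ∉ S →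
      Set.Subsingleton S := by
    intro _ h0 x hx y hy
    have hx0 : x ≠ 0 := fun h => h0 (h ▸ hx)
    have hy0 : y ≠ 0 := fun h => h0 (h ▸ hy)
    exact huniq x hx y hy hx0 hy0
  by_cases hex : ∃ w ∈ S, w ≠ 0
  · obtain ⟨w0, hw0, hw0ne⟩ := hex
    refine ⟨w0, ?_, hsub w0⟩
    intro w hw
    by_cases hw0' : w = 0
    · exact Or.inl hw0'
    · exact Or.inr (huniq w hw w0 hw0 hw0' hw0ne)
  · push_neg at hex
    refine ⟨0, ?_, hsub 0⟩
    intro w hw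
    exact Or.inl (hex w hw)
end
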